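/- arXiv:1105.5179 — 10 statements merged into one kernel-verified Lean document; each statement's English description precedes it below -/
import Mathlib

section
/- Let (R, m) be a finite commutative local ring of characteristic p, where p is prime, and suppose |R/m| = p^m. Then there exist an element β ∈ R and a positive integer t such that β^{p^{mt} − 1} = 1, the subring A = ℤ_p[β] of R generated by β over the prime subring is a finite field, and the residue map R → R/m restricts to a ring isomorphism from A onto R/m; that is, A is a coefficient field of R. -/
/-!
With `q = |R/m| = p ^ m`, every `u : R` satisfies `u ^ q - u ∈ m`, and `m` is nil. As `x ↦ x ^ q`
is additive in characteristic `p`, raising `u` to a large power of `q` kills that nilpotent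
error and yields the Teichmüller lift `β` of `ū`, with `β ^ q = β`. Lifting a generator of the
cyclic group `(R/m)ˣ` this way, the ring `ℤ_p[β]` is pointwise fixed by `x ↦ x ^ q`, so it meets
`m` only in `0` (a nilpotent `a` with `a ^ q = a` vanishes), and its image `𝔽_p[ū]` is all of `R/m`.
-/

open IsLocalRing

theorem eq_zero_of_pow_eq_self_of_isNilpotent {M₀ : Type*} [MonoidWithZero M₀] {a : M₀} {n : ℕ}
    (hn : 1 < n) (ha : a ^ n = a) (hnil : IsNilpotent a) : a = 0 := by
  obtain ⟨k, hk⟩ := hnil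
  have hpow : ∀ j, a ^ n ^ j = a := by
    intro j
    induction j with
    | zero => rw [pow_zero, pow_one]
    | succ j ih => rw [pow_succ, pow_mul, ih, ha]
  rw [← hpow k]
  exact pow_eq_zero_of_le (Nat.lt_pow_self hn).le hk

theorem pow_expChar_pow_eq_self_of_mem_closure {R : Type*} [CommRing R] {p m : ℕ} [ExpChar R p]
    {β : R} (hβ : β ^ p ^ m = β) {a : R} (ha : a ∈ Subring.closure {β}) : a ^ p ^ m = a :=
  (Subring.closure_le (t := (iterateFrobenius R p m).eqLocus (RingHom.id R)) |>.mpr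
    (Set.singleton_subset_iff.mpr hβ)) ha

theorem Subring.closure_singleton_eq_top_of_forall_mem_powers {K : Type*} [DivisionRing K] {ζ : Kˣ}
    (hζ : ∀ y : Kˣ, y ∈ Submonoid.powers ζ) : Subring.closure {(ζ : K)} = ⊤ := by
  refine eq_top_iff.mpr fun y _ ↦ ?_
  rcases eq_or_ne y 0 with rfl | hy
  · exact zero_mem _
  obtain ⟨i, hi : ζ ^ i = Units.mk0 y hy⟩ := hζ (Units.mk0 y hy)
  have hy' : (ζ : K) ^ i = y := by rw [← Units.val_pow_eq_pow_val, hi, Units.val_mk0]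
  rw [← hy']
  exact pow_mem (Subring.subset_closure (Set.mem_singleton _)) i

section ZeroDimensionalLocalRing

variable {R : Type*} [CommRing R] [IsLocalRing R] [Ring.KrullDimLE 0 R]

theorem injective_residue_comp_subtype_of_pow_eq_self (S : Subring R) {n : ℕ} (hn : 1 < n)
    (hS : ∀ a ∈ S, a ^ n = a) : Function.Injective ((residue R).comp S.subtype) := by
  refine (injective_iff_map_eq_zero _).mpr fun a ha ↦ Subtype.ext ?_
  exact eq_zero_of_pow_eq_self_of_isNilpotent hn (hS a a.2)
    (Ring.KrullDimLE.isNilpotent_iff_mem_maximalIdeal.mpr ((residue_eq_zero_iff _).mp ha))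

variable {p m : ℕ} [ExpChar R p]

theorem exists_pow_eq_self_residue_eq [Finite (ResidueField R)]
    (hcard : Nat.card (ResidueField R) = p ^ m) (u : R) :
    ∃ β : R, β ^ p ^ m = β ∧ residue R β = residue R u := by
  cases nonempty_fintype (ResidueField R)
  rw [Nat.card_eq_fintype_card] at hcard
  obtain ⟨e, he⟩ : IsNilpotent (u ^ p ^ m - u) := by
    refine Ring.KrullDimLE.isNilpotent_iff_mem_maximalIdeal.mpr ((residue_eq_zero_iff _).mp ?_)
    rw [map_sub, map_pow, ← hcard, FiniteField.pow_card, sub_self]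
  have hq : 1 < p ^ m := hcard ▸ Fintype.one_lt_card
  have herr : (u ^ p ^ m - u) ^ p ^ (m * e) = 0 := by
    refine pow_eq_zero_of_le ?_ he
    rw [pow_mul]
    exact (Nat.lt_pow_self hq).le
  refine ⟨u ^ p ^ (m * e), ?_, ?_⟩
  · rw [← pow_mul, mul_comm, pow_mul, ← sub_eq_zero, ← sub_pow_expChar_pow, herr]
  · rw [map_pow, pow_mul, ← hcard, FiniteField.pow_card_pow]

theorem bijective_residue_comp_closure_singleton (hq : 1 < p ^ m) {β : R} (hβ : β ^ p ^ m = β)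
    (hgen : Subring.closure {residue R β} = ⊤) :
    Function.Bijective ((residue R).comp (Subring.closure {β}).subtype) := by
  refine ⟨injective_residue_comp_subtype_of_pow_eq_self _ hq
    fun _ ↦ pow_expChar_pow_eq_self_of_mem_closure hβ, ?_⟩
  rw [← RingHom.range_eq_top, ← RingHom.map_range, Subring.range_subtype, RingHom.map_closure,
    Set.image_singleton, hgen]

end ZeroDimensionalLocalRing

/-- Theorem 2.2: For a finite commutative local ring `(R, m)` of prime characteristic `p`
with `|R/m| = p ^ m`, there exist `β ∈ R` and a positive integer `t` such that
`β ^ (p ^ (m * t) - 1) = 1`, the subring `A = ℤ_p[β]` generated by `β` is a (finite) field,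
and the residue map restricts to a ring isomorphism from `A` onto `R/m`;
that is, `A` is a coefficient field of `R`. -/
theorem exists_coefficient_field_of_finite_local_ring
    (p m : ℕ) (hp : p.Prime) (R : Type*) [CommRing R] [IsLocalRing R] [Finite R]
    [CharP R p] (hcard : Nat.card (IsLocalRing.ResidueField R) = p ^ m) :
    ∃ (β : R) (t : ℕ), 0 < t ∧ β ^ (p ^ (m * t) - 1) = 1 ∧
      IsField (Subring.closure {β}) ∧
      Function.Bijective
        ((IsLocalRing.residue R).comp (Subring.closure {β}).subtype) := by
  have := Fact.mk hp
  have : Finite (ResidueField R) := Finite.of_surjective _ residue_surjective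
  have hq : 1 < p ^ m := hcard ▸ Finite.one_lt_card
  obtain ⟨ζ, hζ⟩ := IsCyclic.exists_monoid_generator (α := (ResidueField R)ˣ)
  obtain ⟨u, hu⟩ := residue_surjective (ζ : ResidueField R)
  obtain ⟨β, hβ, hres⟩ := exists_pow_eq_self_residue_eq hcard u
  have hbij := bijective_residue_comp_closure_singleton hq hβ
    (by rw [hres, hu]; exact Subring.closure_singleton_eq_top_of_forall_mem_powers hζ)
  have hunit : IsUnit β := (residue_ne_zero_iff_isUnit β).mp (by rw [hres, hu]; exact ζ.ne_zero)
  refine ⟨β, 1, one_pos, ?_,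
    MulEquiv.isField (Field.toIsField _) (RingEquiv.ofBijective _ hbij).toMulEquiv, hbij⟩
  refine hunit.mul_right_cancel ?_
  rw [mul_one, ← pow_succ, one_mul, Nat.sub_add_cancel hq.le, hβ]
end

section
/- Let (R, m) be a finite commutative local ring with char(R) = p, where p is prime. If every ideal of R is principal and m has nilpotency index s, then R is isomorphic as a ring to F[X]/(X^s) for some finite field F (namely a field F isomorphic to R/m). -/
/-!
Once `p ^ N ≥ s`, the map `x ↦ x ^ p ^ N` kills `m` and so factors through `F = R/m`; since `F`
is a finite field, its Frobenius is bijective, and undoing it yields a ring section `σ : F → R`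
of the residue map. With `m = (t)`, the map `F[X] → R` given by `σ` on coefficients and `X ↦ t`
is surjective: `R = σ(F) + m` and `m = tR` let us peel off one power of `t` at a time until
`t ^ s = 0`. A nonzero `g` is sent to `t ^ i` times a unit, `i` its trailing degree, because the
residue of the cofactor is its nonzero constant term; so the kernel is `(X ^ s)`.
-/

open Polynomial IsLocalRing

namespace IsLocalRing

section CoefficientField

variable {R : Type*} [CommRing R] [IsLocalRing R] (p : ℕ) [ExpChar R p]

theorem iterateFrobenius_eq_zero_of_mem_maximalIdeal {N : ℕ}
    (hN : maximalIdeal R ^ p ^ N = ⊥) {x : R} (hx : x ∈ maximalIdeal R) :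
    iterateFrobenius R p N x = 0 := by
  rw [iterateFrobenius_def]
  simpa [hN] using Ideal.pow_mem_pow hx (p ^ N)

noncomputable def liftIterateFrobenius (N : ℕ) (hN : maximalIdeal R ^ p ^ N = ⊥) :
    ResidueField R →+* R :=
  Ideal.Quotient.lift _ (iterateFrobenius R p N) fun _ ↦
    iterateFrobenius_eq_zero_of_mem_maximalIdeal p hN

theorem residue_liftIterateFrobenius [ExpChar (ResidueField R) p] {N : ℕ}
    (hN : maximalIdeal R ^ p ^ N = ⊥) (x : ResidueField R) :
    residue R (liftIterateFrobenius p N hN x) = iterateFrobenius (ResidueField R) p N x := by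
  obtain ⟨y, rfl⟩ := residue_surjective x
  change residue R (iterateFrobenius R p N y) = _
  simp [iterateFrobenius_def]

theorem exists_residue_section [ExpChar (ResidueField R) p] [PerfectRing (ResidueField R) p]
    (hp : p.Prime) (hnil : IsNilpotent (maximalIdeal R)) :
    ∃ σ : ResidueField R →+* R, Function.LeftInverse (residue R) σ := by
  obtain ⟨n, hn⟩ := hnil
  rw [Ideal.zero_eq_bot] at hn
  obtain ⟨N, hN⟩ : ∃ N, maximalIdeal R ^ p ^ N = ⊥ :=
    ⟨n, le_bot_iff.mp (hn ▸ Ideal.pow_le_pow_right (Nat.lt_pow_self hp.one_lt).le)⟩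
  refine ⟨(liftIterateFrobenius p N hN).comp (iterateFrobeniusEquiv (ResidueField R) p N).symm,
    fun x ↦ ?_⟩
  rw [RingHom.comp_apply, residue_liftIterateFrobenius, ← coe_iterateFrobeniusEquiv]
  exact RingEquiv.apply_symm_apply _ x

end CoefficientField

section EvalOfSection

variable {R : Type*} [CommRing R] [IsLocalRing R] {σ : ResidueField R →+* R} {t : R}

theorem residue_eval₂_of_leftInverse (hσ : Function.LeftInverse (residue R) σ)
    (ht : t ∈ maximalIdeal R) (g : (ResidueField R)[X]) :
    residue R (g.eval₂ σ t) = g.coeff 0 := by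
  rw [hom_eval₂, show (residue R).comp σ = RingHom.id _ from RingHom.ext hσ,
    (residue_eq_zero_iff t).mpr ht, eval₂_at_zero, RingHom.id_apply]

theorem exists_eval₂_eq_pow_natTrailingDegree_mul_unit (hσ : Function.LeftInverse (residue R) σ)
    (ht : t ∈ maximalIdeal R) {g : (ResidueField R)[X]} (hg : g ≠ 0) :
    ∃ u : Rˣ, g.eval₂ σ t = t ^ g.natTrailingDegree * u := by
  set n := g.natTrailingDegree
  obtain ⟨h, hgh⟩ : X ^ n ∣ g :=
    X_pow_dvd_iff.mpr fun _ ↦ coeff_eq_zero_of_lt_natTrailingDegree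
  have hh : h.coeff 0 ≠ 0 := by
    rw [← coeff_X_pow_mul h n 0, zero_add, ← hgh]
    exact mt trailingCoeff_eq_zero.mp hg
  have hunit : IsUnit (h.eval₂ σ t) := by
    rwa [← residue_ne_zero_iff_isUnit, residue_eval₂_of_leftInverse hσ ht]
  exact ⟨hunit.unit, by rw [hgh, eval₂_mul, eval₂_X_pow, IsUnit.unit_spec]⟩

theorem ker_eval₂RingHom_of_leftInverse (hσ : Function.LeftInverse (residue R) σ)
    (ht : t ∈ maximalIdeal R) (hnil : IsNilpotent t) :
    RingHom.ker (eval₂RingHom σ t) = Ideal.span {X ^ nilpotencyClass t} := by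
  refine le_antisymm (fun g hg ↦ ?_) ?_
  · rw [Ideal.mem_span_singleton]
    rcases eq_or_ne g 0 with rfl | hg0
    · exact dvd_zero _
    obtain ⟨u, hu⟩ := exists_eval₂_eq_pow_natTrailingDegree_mul_unit hσ ht hg0
    have htn : t ^ g.natTrailingDegree = 0 := by
      rw [RingHom.mem_ker, coe_eval₂RingHom, hu] at hg
      exact (Units.mul_left_eq_zero u).mp hg
    exact (pow_dvd_pow X (Nat.sInf_le htn : nilpotencyClass t ≤ _)).trans
      (X_pow_dvd_iff.mpr fun _ ↦ coeff_eq_zero_of_lt_natTrailingDegree)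
  · rw [Ideal.span_le, Set.singleton_subset_iff, SetLike.mem_coe, RingHom.mem_ker,
      coe_eval₂RingHom, eval₂_X_pow, pow_nilpotencyClass hnil]

theorem eval₂RingHom_surjective_of_leftInverse (hσ : Function.LeftInverse (residue R) σ)
    (hm : maximalIdeal R = Ideal.span {t}) (hnil : IsNilpotent t) :
    Function.Surjective (eval₂RingHom σ t) := by
  have approx : ∀ k (r : R), ∃ g : (ResidueField R)[X], t ^ k ∣ r - g.eval₂ σ t := by
    intro k r
    induction k with
    | zero => exact ⟨0, by simp⟩
    | succ k ih =>
      obtain ⟨g, u, hu⟩ := ih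
      obtain ⟨v, hv⟩ : t ∣ u - σ (residue R u) := by
        rw [← Ideal.mem_span_singleton, ← hm, ← residue_eq_zero_iff, map_sub, hσ, sub_self]
      refine ⟨g + C (residue R u) * X ^ k, v, ?_⟩
      rw [eval₂_add, eval₂_mul, eval₂_C, eval₂_X_pow, pow_succ, mul_assoc, ← hv]
      linear_combination hu
  obtain ⟨n, hn⟩ := hnil
  intro r
  obtain ⟨g, hg⟩ := approx n r
  exact ⟨g, (sub_eq_zero.mp (zero_dvd_iff.mp (hn ▸ hg))).symm⟩

end EvalOfSection

end IsLocalRing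

theorem finite_local_pir_char_p_iso_quotient_polynomial_general
    (p s : ℕ) (hp : p.Prime) (R : Type*) [CommRing R] [IsLocalRing R] [Finite R]
    [CharP R p] (hpir : IsPrincipalIdealRing R)
    (hnil : (IsLocalRing.maximalIdeal R) ^ s = ⊥)
    (hnil' : (IsLocalRing.maximalIdeal R) ^ (s - 1) ≠ ⊥) :
    Nonempty
      (R ≃+* (Polynomial (IsLocalRing.ResidueField R) ⧸
        Ideal.span {(Polynomial.X : Polynomial (IsLocalRing.ResidueField R)) ^ s})) := by
  have : Fact p.Prime := ⟨hp⟩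
  have : CharP (ResidueField R) p := (CharP.charP_iff_prime_eq_zero hp).mpr <| by
    rw [← map_natCast (residue R), CharP.cast_eq_zero, map_zero]
  have : Finite (ResidueField R) := Finite.of_surjective _ residue_surjective
  obtain ⟨σ, hσ⟩ := exists_residue_section p hp ⟨s, hnil⟩
  obtain ⟨t, hm⟩ := (hpir.principal (maximalIdeal R)).principal
  have hts : t ^ s = 0 := by simpa [hm, Ideal.span_singleton_pow] using hnil
  have hts' : t ^ (s - 1) ≠ 0 := by simpa [hm, Ideal.span_singleton_pow] using hnil'
  have hclass : nilpotencyClass t = s := by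
    obtain ⟨k, rfl⟩ := Nat.exists_eq_add_one_of_ne_zero (by rintro rfl; simp at hts : s ≠ 0)
    exact nilpotencyClass_eq_succ_iff.mpr ⟨hts, hts'⟩
  have htm : t ∈ maximalIdeal R := hm ▸ Ideal.mem_span_singleton_self t
  rw [← hclass, ← ker_eval₂RingHom_of_leftInverse hσ htm ⟨s, hts⟩]
  exact ⟨(RingHom.quotientKerEquivOfSurjective
    (eval₂RingHom_surjective_of_leftInverse hσ hm ⟨s, hts⟩)).symm⟩

/-- Corollary 2.3 (forward direction): a finite commutative local ring of prime
characteristic `p` in which every ideal is principal and whose maximal ideal has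
nilpotency index `s` is isomorphic to `F[X]/(X^s)` for a finite field `F`,
namely `F = R/m` the residue field. -/
theorem finite_local_pir_char_p_iso_quotient_polynomial
    (p s : ℕ) (hp : p.Prime) (R : Type*) [CommRing R] [IsLocalRing R] [Finite R]
    [CharP R p] (hpir : IsPrincipalIdealRing R) (hs : 0 < s)
    (hnil : (IsLocalRing.maximalIdeal R) ^ s = ⊥)
    (hnil' : (IsLocalRing.maximalIdeal R) ^ (s - 1) ≠ ⊥) :
    Nonempty
      (R ≃+* (Polynomial (IsLocalRing.ResidueField R) ⧸
        Ideal.span {(Polynomial.X : Polynomial (IsLocalRing.ResidueField R)) ^ s})) :=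
  finite_local_pir_char_p_iso_quotient_polynomial_general p s hp R hpir hnil hnil'
end

section
/- Let p be a prime, s ≥ 1 and m ≥ 0 integers, g(X) ∈ ℤ_p[X] a monic irreducible polynomial, and v_1(X), …, v_m(X) ∈ ℤ_p[X] polynomials not divisible by g(X) with deg v_j(X) < deg g(X) for all j. Let 1 ≤ s_1 < s_2 < ⋯ < s_m ≤ s be integers and set Q = (Y^{s+1}, g(X) − Σ_{j=1}^m v_j(X)Y^{s_j}) in S = ℤ_p[X, Y]. Then S/Q is a finite commutative local ring of characteristic p in which every ideal is principal, and its maximal ideal has nilpotency index s + 1; in particular S/Q has exactly s nontrivial ideals. -/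
set_option synthInstance.maxHeartbeats 400000

open Polynomial

/-- The ideal `Q = (Y^{s+1}, g(X) - ∑ⱼ vⱼ(X)·Y^{sⱼ})` of `S = ℤ_p[X][Y]`, where `S` is
modelled as `Polynomial (Polynomial (ZMod p))`, the outer indeterminate playing the
role of `Y` and the inner one the role of `X`. -/
noncomputable def paperIdealQp (p s : ℕ) {m : ℕ} (g : Polynomial (ZMod p))
    (v : Fin m → Polynomial (ZMod p)) (σ : Fin m → ℕ) :
    Ideal (Polynomial (Polynomial (ZMod p))) :=
  Ideal.span
    { (Polynomial.X : Polynomial (Polynomial (ZMod p))) ^ (s + 1),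
      Polynomial.C g - ∑ j, Polynomial.C (v j) * Polynomial.X ^ (σ j) }

/-! Modulo `Q` we have `g = Y·h` with `h = ∑ⱼ vⱼ Y^{sⱼ-1}`, so the ideal `(y)` of `S/Q` is the image
of `(g, Y)`, which is maximal because `g` is irreducible; as `y` is nilpotent, `(y)` is the unique
maximal ideal. In a local ring whose maximal ideal is generated by a nilpotent `t`, every ideal is
some `(tᵏ)`, so the ideals of `S/Q` form the chain `(1) ⊋ (y) ⊋ ⋯ ⊋ (yˢ) ⊋ 0`, strict because
`Yˢ ∉ Q`. Finiteness holds because `S/Q` is generated by the images `x`, `y` of `X`, `Y`, both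
integral over `ℤ_p`: `g(x)^{s+1} = 0` and `y^{s+1} = 0`. -/

open Ideal IsLocalRing

namespace IsLocalRing

variable {R : Type*} [CommRing R] {t : R}

theorem of_isMaximal_span_singleton_of_isNilpotent (hmax : (span {t}).IsMaximal)
    (hnil : IsNilpotent t) : IsLocalRing R := by
  refine of_unique_max_ideal ⟨span {t}, hmax, fun M hM => ?_⟩
  obtain ⟨n, hn⟩ := hnil
  have htM : span {t} ≤ M :=
    (span_singleton_le_iff_mem M).mpr (hM.isPrime.mem_of_pow_mem n (hn ▸ M.zero_mem))
  exact (hmax.eq_of_le hM.ne_top htM).symm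

variable [IsLocalRing R] (ht : maximalIdeal R = span {t})
include ht

theorem pow_mem_span_singleton_of_notMem_span_pow_succ {a : R} {j : ℕ}
    (ha : a ∈ span {t ^ j}) (ha' : a ∉ span {t ^ (j + 1)}) : t ^ j ∈ span {a} := by
  obtain ⟨c, rfl⟩ := mem_span_singleton'.mp ha
  have hc : IsUnit c := by
    by_contra hc
    obtain ⟨d, rfl⟩ := mem_span_singleton'.mp (ht ▸ (mem_maximalIdeal c).mpr hc)
    exact ha' (mem_span_singleton'.mpr ⟨d, by ring⟩)
  exact mem_span_singleton'.mpr ⟨↑hc.unit⁻¹, by rw [← mul_assoc, IsUnit.val_inv_mul, one_mul]⟩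

theorem exists_eq_span_pow (hnil : IsNilpotent t) (I : Ideal R) : ∃ k, I = span {t ^ k} := by
  classical
  obtain ⟨n, hn⟩ := hnil
  have hex : ∃ k, t ^ k ∈ I := ⟨n, hn ▸ I.zero_mem⟩
  refine ⟨Nat.find hex, le_antisymm ?_ ((span_singleton_le_iff_mem I).mpr (Nat.find_spec hex))⟩
  suffices ∀ j ≤ Nat.find hex, I ≤ span {t ^ j} from this _ le_rfl
  intro j hj
  induction j with
  | zero => simp
  | succ j ih =>
    intro a ha
    by_contra ha'
    have htj : t ^ j ∈ span {a} :=
      pow_mem_span_singleton_of_notMem_span_pow_succ ht (ih (by omega) ha) ha'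
    exact Nat.find_min hex (by omega) ((span_singleton_le_iff_mem I).mpr ha htj)

theorem isPrincipalIdealRing_of_maximalIdeal_eq_span (hnil : IsNilpotent t) :
    IsPrincipalIdealRing R :=
  ⟨fun I => let ⟨k, hk⟩ := exists_eq_span_pow ht hnil I; ⟨⟨t ^ k, hk⟩⟩⟩

theorem natCard_ideal_ne_bot_ne_top {s : ℕ} (hs : t ^ (s + 1) = 0) (hs' : t ^ s ≠ 0) :
    Nat.card {I : Ideal R // I ≠ ⊥ ∧ I ≠ ⊤} = s := by
  have hpow_ne : ∀ k ≤ s, t ^ k ≠ 0 := fun k hk hk0 => hs' (pow_eq_zero_of_le hk hk0)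
  have ht_nonunit : ¬IsUnit t := (mem_maximalIdeal t).mp (ht ▸ mem_span_singleton_self t)
  have himage : {I : Ideal R | I ≠ ⊥ ∧ I ≠ ⊤} = (fun k => span {t ^ k}) '' Set.Icc 1 s := by
    ext I
    constructor
    · rintro ⟨hbot, htop⟩
      obtain ⟨k, rfl⟩ := exists_eq_span_pow ht ⟨s + 1, hs⟩ I
      refine ⟨k, ⟨?_, ?_⟩, rfl⟩
      · by_contra! hk
        simp_all [Nat.lt_one_iff.mp hk]
      · by_contra! hk
        exact hbot (span_singleton_eq_bot.mpr (pow_eq_zero_of_le hk hs))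
    · rintro ⟨k, ⟨hk1, hks⟩, rfl⟩
      refine ⟨?_, ?_⟩
      · simpa [span_singleton_eq_bot] using hpow_ne k hks
      · simpa [span_singleton_eq_top, isUnit_pow_iff (by omega : k ≠ 0)] using ht_nonunit
  have hinj : Set.InjOn (fun k => span {t ^ k}) (Set.Icc 1 s) := by
    suffices ∀ i j, i < j → j ≤ s → t ^ i ∉ span {t ^ j} by
      intro i hi j hj (hij : span {t ^ i} = span {t ^ j})
      by_contra hne
      rcases lt_or_gt_of_ne hne with h | h
      · exact this i j h hj.2 (hij ▸ mem_span_singleton_self _)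
      · exact this j i h hi.2 (hij ▸ mem_span_singleton_self _)
    intro i j hij hjs hmem
    obtain ⟨c, hc⟩ := mem_span_singleton'.mp hmem
    apply hpow_ne s le_rfl
    calc t ^ s = t ^ (s - i) * t ^ i := by rw [← pow_add]; congr 1; omega
      _ = c * t ^ (s - i + j) := by rw [← hc, pow_add]; ring
      _ = 0 := by rw [pow_eq_zero_of_le (by omega) hs, mul_zero]
  change Nat.card {I : Ideal R | I ≠ ⊥ ∧ I ≠ ⊤} = s
  rw [Nat.card_coe_set_eq, himage, hinj.ncard_image, Set.ncard_Icc_nat, Nat.add_sub_cancel]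

end IsLocalRing

namespace Polynomial

theorem aeval_C_X {R : Type*} [CommRing R] (f : R[X]) : aeval (C X : R[X][X]) f = C f := by
  simpa using aeval_algHom_apply (CAlgHom (R := R) (A := R[X])) X f

theorem adjoin_C_X_X (R : Type*) [CommRing R] :
    Algebra.adjoin R {C X, X} = (⊤ : Subalgebra R R[X][X]) := by
  refine eq_top_iff.mpr fun f _ => ?_
  rw [f.as_sum_range_C_mul_X_pow]
  refine Subalgebra.sum_mem _ fun i _ => Subalgebra.mul_mem _ ?_ (Subalgebra.pow_mem _ ?_ _)
  · rw [← aeval_C_X (f.coeff i)]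
    exact Algebra.adjoin_mono (Set.singleton_subset_iff.mpr (Set.mem_insert _ _))
      (aeval_mem_adjoin_singleton R _)
  · exact Algebra.subset_adjoin (by simp)

theorem module_finite_quotient_of_C_mem_of_X_pow_mem {R : Type*} [CommRing R]
    {Q : Ideal R[X][X]} {f : R[X]} (hf : f.Monic) (hfQ : C f ∈ Q) {n : ℕ} (hn : X ^ n ∈ Q) :
    Module.Finite R (R[X][X] ⧸ Q) := by
  set φ := Ideal.Quotient.mkₐ R Q
  have hx : IsIntegral R (φ (C X)) := ⟨f, hf, by
    rw [← aeval_def, aeval_algHom_apply, aeval_C_X, Ideal.Quotient.mkₐ_eq_mk,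
      Ideal.Quotient.eq_zero_iff_mem]
    exact hfQ⟩
  have hy : IsIntegral R (φ X) := ⟨X ^ n, monic_X_pow n, by
    rw [← aeval_def, aeval_X_pow, ← map_pow, Ideal.Quotient.mkₐ_eq_mk,
      Ideal.Quotient.eq_zero_iff_mem]
    exact hn⟩
  have htop : Algebra.adjoin R {φ (C X), φ X} = ⊤ := by
    rw [← Set.image_pair, ← AlgHom.map_adjoin, adjoin_C_X_X, Algebra.map_top,
      AlgHom.range_eq_top]
    exact Ideal.Quotient.mkₐ_surjective R Q
  have hfg := fg_adjoin_of_finite (R := R) (Set.toFinite {φ (C X), φ X}) (by simp [hx, hy])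
  rw [htop, Algebra.top_toSubmodule] at hfg
  exact ⟨hfg⟩

variable {A : Type*} [CommRing A]

theorem isMaximal_span_C_X {g : A} (hg : (span {g}).IsMaximal) :
    (span {C g, X} : Ideal A[X]).IsMaximal := by
  have e := (quotientSpanCXSubCAlgEquiv g 0).toMulEquiv
  rw [map_zero, sub_zero] at e
  rw [Ideal.Quotient.maximal_ideal_iff_isField_quotient] at hg ⊢
  exact MulEquiv.isField hg e

/-- `X` is prime and does not divide `C g - X * h`, so `X ^ s` divides the cofactor of
`C g - X * h`; cancelling `X ^ s` and evaluating at `0` then exhibits an inverse of `g`. -/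
theorem X_pow_notMem_span [IsDomain A] {g : A} (hg0 : g ≠ 0) (hg : ¬IsUnit g) (h : A[X])
    (s : ℕ) : X ^ s ∉ span {X ^ (s + 1), C g - X * h} := by
  intro hmem
  obtain ⟨a, b, hab⟩ := mem_span_pair.mp hmem
  have hXw : ¬X ∣ C g - X * h := by
    rw [X_dvd_iff]
    simpa using hg0
  obtain ⟨c, rfl⟩ : X ^ s ∣ b := prime_X.pow_dvd_of_dvd_mul_left s hXw
    ⟨1 - a * X, by linear_combination hab⟩
  have hc : 1 - a * X = c * (C g - X * h) := by
    apply mul_left_cancel₀ (pow_ne_zero s X_ne_zero)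
    linear_combination -hab
  apply hg
  refine IsUnit.of_mul_eq_one (c.eval 0) ?_
  simpa [mul_comm] using (congrArg (eval 0) hc).symm

theorem isMaximal_span_mk_X {g : A} (hg : (span {g}).IsMaximal) (h : A[X]) (s : ℕ) :
    (span {Ideal.Quotient.mk (span {X ^ (s + 1), C g - X * h}) X}).IsMaximal := by
  set Q := span {X ^ (s + 1), C g - X * h}
  have hCg : Ideal.Quotient.mk Q (C g) ∈ span {Ideal.Quotient.mk Q X} := by
    rw [mem_span_singleton']
    refine ⟨Ideal.Quotient.mk Q h, ?_⟩
    rw [eq_comm, ← map_mul, Ideal.Quotient.mk_eq_mk_iff_sub_mem, mul_comm h X]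
    exact subset_span (by simp)
  have hmap : span {Ideal.Quotient.mk Q X} = (span {C g, X}).map (Ideal.Quotient.mk Q) := by
    rw [map_span, Set.image_pair]
    exact (Submodule.span_insert_eq_span hCg).symm
  have hQ : Q ≤ span {C g, X} := by
    rw [span_le, Set.pair_subset_iff]
    refine ⟨pow_mem_of_mem _ (subset_span (by simp)) _ s.succ_pos, sub_mem ?_ ?_⟩
    · exact subset_span (by simp)
    · exact mul_mem_right _ _ (subset_span (by simp))
  have hmax := isMaximal_span_C_X hg
  rw [hmap]
  exact IsMaximal.map_of_surjective_of_ker_le Ideal.Quotient.mk_surjective (by rwa [mk_ker])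

theorem C_pow_succ_mem_span (g : A) (h : A[X]) (s : ℕ) :
    C g ^ (s + 1) ∈ span {X ^ (s + 1), C g - X * h} := by
  have hw : C g - X * h ∈ span {X ^ (s + 1), C g - X * h} := subset_span (by simp)
  have hX : X ^ (s + 1) ∈ span {X ^ (s + 1), C g - X * h} := subset_span (by simp)
  rw [← sub_add_cancel (C g ^ (s + 1)) ((X * h) ^ (s + 1))]
  refine add_mem (mem_of_dvd _ (sub_dvd_pow_sub_pow _ _ _) hw) ?_
  rw [mul_pow]
  exact mul_mem_right _ _ hX

end Polynomial

theorem quotient_by_paperIdealQp_is_finite_local_pir_general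
    (p s m : ℕ) (hp : p.Prime)
    (g : Polynomial (ZMod p)) (hgmonic : g.Monic) (hgirr : Irreducible g)
    (v : Fin m → Polynomial (ZMod p))
    (σ : Fin m → ℕ) (hσ1 : ∀ j, 1 ≤ σ j) :
    Finite (Polynomial (Polynomial (ZMod p)) ⧸ paperIdealQp p s g v σ) ∧
    CharP (Polynomial (Polynomial (ZMod p)) ⧸ paperIdealQp p s g v σ) p ∧
    IsPrincipalIdealRing (Polynomial (Polynomial (ZMod p)) ⧸ paperIdealQp p s g v σ) ∧
    ∃ h : IsLocalRing (Polynomial (Polynomial (ZMod p)) ⧸ paperIdealQp p s g v σ),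
      haveI := h
      (IsLocalRing.maximalIdeal
          (Polynomial (Polynomial (ZMod p)) ⧸ paperIdealQp p s g v σ)) ^ (s + 1) = ⊥ ∧
      (IsLocalRing.maximalIdeal
          (Polynomial (Polynomial (ZMod p)) ⧸ paperIdealQp p s g v σ)) ^ s ≠ ⊥ ∧
      Nat.card {I : Ideal (Polynomial (Polynomial (ZMod p)) ⧸ paperIdealQp p s g v σ) //
          I ≠ ⊥ ∧ I ≠ ⊤} = s := by
  have : Fact p.Prime := ⟨hp⟩
  set h : (ZMod p)[X][X] := ∑ j, C (v j) * X ^ (σ j - 1)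
  have hQ : paperIdealQp p s g v σ = span {X ^ (s + 1), C g - X * h} := by
    have hsum : ∑ j, C (v j) * X ^ σ j = X * h := by
      rw [Finset.mul_sum]
      refine Finset.sum_congr rfl fun j _ => ?_
      rw [mul_left_comm, ← pow_succ', Nat.sub_add_cancel (hσ1 j)]
    rw [paperIdealQp, hsum]
  rw [hQ]
  set y := Ideal.Quotient.mk (span {X ^ (s + 1), C g - X * h}) X
  have hy : y ^ (s + 1) = 0 := by
    rw [← map_pow, Ideal.Quotient.eq_zero_iff_mem]
    exact subset_span (by simp)
  have hys : y ^ s ≠ 0 := by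
    rw [← map_pow, Ne, Ideal.Quotient.eq_zero_iff_mem]
    exact X_pow_notMem_span hgmonic.ne_zero hgirr.not_isUnit h s
  have hmax := isMaximal_span_mk_X (PrincipalIdealRing.isMaximal_of_irreducible hgirr) h s
  have hloc := of_isMaximal_span_singleton_of_isNilpotent hmax ⟨_, hy⟩
  have hm := (eq_maximalIdeal hmax).symm
  have hfin := module_finite_quotient_of_C_mem_of_X_pow_mem (hgmonic.pow (s + 1))
    (by simpa using C_pow_succ_mem_span g h s) (subset_span (by simp) : X ^ (s + 1) ∈ _)
  refine ⟨Module.finite_of_finite (ZMod p),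
    charP_of_injective_algebraMap (algebraMap (ZMod p) _).injective p,
    isPrincipalIdealRing_of_maximalIdeal_eq_span hm ⟨_, hy⟩, hloc, ?_, ?_,
    natCard_ideal_ne_bot_ne_top hm hy hys⟩
  · rw [hm, span_singleton_pow, hy, span_singleton_eq_bot]
  · rwa [hm, span_singleton_pow, Ne, span_singleton_eq_bot]

/-- Theorem 3.2 (⇐ direction): with data as in the paper, `ℤ_p[X,Y]/Q` with
`Q = (Y^{s+1}, g(X) - ∑ⱼ vⱼ(X)·Y^{sⱼ})` is a finite commutative local ring of
characteristic `p`, every ideal of it is principal, its maximal ideal has nilpotency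
index `s + 1`, and it has exactly `s` nontrivial ideals. -/
theorem quotient_by_paperIdealQp_is_finite_local_pir
    (p s m : ℕ) (hp : p.Prime) (hs : 1 ≤ s)
    (g : Polynomial (ZMod p)) (hgmonic : g.Monic) (hgirr : Irreducible g)
    (v : Fin m → Polynomial (ZMod p))
    (hv : ∀ j, ¬ g ∣ v j) (hvdeg : ∀ j, (v j).degree < g.degree)
    (σ : Fin m → ℕ) (hσmono : StrictMono σ) (hσ1 : ∀ j, 1 ≤ σ j) (hσs : ∀ j, σ j ≤ s) :
    Finite (Polynomial (Polynomial (ZMod p)) ⧸ paperIdealQp p s g v σ) ∧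
    CharP (Polynomial (Polynomial (ZMod p)) ⧸ paperIdealQp p s g v σ) p ∧
    IsPrincipalIdealRing (Polynomial (Polynomial (ZMod p)) ⧸ paperIdealQp p s g v σ) ∧
    ∃ h : IsLocalRing (Polynomial (Polynomial (ZMod p)) ⧸ paperIdealQp p s g v σ),
      haveI := h
      (IsLocalRing.maximalIdeal
          (Polynomial (Polynomial (ZMod p)) ⧸ paperIdealQp p s g v σ)) ^ (s + 1) = ⊥ ∧
      (IsLocalRing.maximalIdeal
          (Polynomial (Polynomial (ZMod p)) ⧸ paperIdealQp p s g v σ)) ^ s ≠ ⊥ ∧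
      Nat.card {I : Ideal (Polynomial (Polynomial (ZMod p)) ⧸ paperIdealQp p s g v σ) //
          I ≠ ⊥ ∧ I ≠ ⊤} = s :=
  quotient_by_paperIdealQp_is_finite_local_pir_general p s m hp g hgmonic hgirr v σ hσ1
end

section
/- Let p be a prime and let R be a finite commutative local ring of characteristic p in which every ideal is principal and whose maximal ideal has nilpotency index s + 1. Then there exist an integer m ≥ 0, a monic irreducible polynomial g(X) ∈ ℤ_p[X], polynomials v_1(X), …, v_m(X) ∈ ℤ_p[X] not divisible by g(X) with deg v_j(X) < deg g(X), and integers 1 ≤ s_1 < ⋯ < s_m ≤ s, such that R is isomorphic as a ring to ℤ_p[X, Y]/Q where Q = (Y^{s+1}, g(X) − Σ_{j=1}^m v_j(X)Y^{s_j}) (in the case m = 0 the empty sum is 0, so Q = (Y^{s+1}, g(X))). -/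
/-!
Because the maximal ideal is nilpotent, `R` is Henselian. If `g` is the minimal polynomial over
`ℤ_p` of a primitive element `α` of the (finite, hence perfect) residue field, then `α` is a
simple root of `g`, so it lifts to a root `a` of `g` in `R`, and `X ↦ a` embeds the field
`K = ℤ_p[X]/(g)` in `R` as a coefficient field. With `θ` a generator of the maximal ideal,
`Y ↦ θ` gives a surjection `K[Y] → R` with kernel `(Y^{s+1})`: a nonzero `F ∈ K[Y]` is `Y^t` times
a polynomial with nonzero constant term, which maps to a unit. Pulling back along
`ℤ_p[X][Y] → K[Y]` gives `R ≅ ℤ_p[X][Y]/(Y^{s+1}, g)`, the case `m = 0`.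
-/

set_option synthInstance.maxHeartbeats 400000

open Polynomial

open IsLocalRing

theorem isAdicComplete_of_pow_smul_top_eq_bot {R M : Type*} [CommRing R] [AddCommGroup M]
    [Module R M] {I : Ideal R} {n : ℕ} (h : I ^ n • (⊤ : Submodule R M) = ⊥) :
    IsAdicComplete I M where
  haus' x hx := by simpa [h] using hx n
  prec' f hf := by
    refine ⟨f n, fun k => ?_⟩
    rcases le_total k n with hk | hk
    · exact hf hk
    · have := hf hk
      rw [h, SModEq.bot] at this
      rw [this]

theorem IsLocalRing.henselianLocalRing_of_pow_maximalIdeal_eq_bot {R : Type*} [CommRing R]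
    [IsLocalRing R] {n : ℕ} (h : maximalIdeal R ^ n = ⊥) : HenselianLocalRing R := by
  have : IsAdicComplete (maximalIdeal R) R :=
    isAdicComplete_of_pow_smul_top_eq_bot (by rw [smul_eq_mul, Ideal.mul_top, h])
  exact { is_henselian := fun f hf a₀ h₁ h₂ =>
    HenselianRing.is_henselian (I := maximalIdeal R) f hf a₀ h₁ (h₂.map _) }

theorem IsLocalRing.exists_adjoinRoot_hom_residue_surjective (p : ℕ) [Fact p.Prime]
    (R : Type*) [CommRing R] [HenselianLocalRing R] [CharP R p] [Finite (ResidueField R)] :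
    ∃ g : (ZMod p)[X], g.Monic ∧ Irreducible g ∧
      ∃ φ : AdjoinRoot g →+* R, Function.Surjective ((residue R).comp φ) := by
  let ι := ZMod.castHom (dvd_refl p) R
  let _ : Algebra (ZMod p) (ResidueField R) := ((residue R).comp ι).toAlgebra
  obtain ⟨α, hα⟩ := Field.exists_primitive_element_of_finite_top (ZMod p) (ResidueField R)
  have hint : IsIntegral (ZMod p) α := .of_finite _ _
  have hsep : (minpoly (ZMod p) α).Separable := Algebra.IsSeparable.isSeparable _ α
  have hensel := ((HenselianLocalRing.TFAE R).out 0 2).mp ‹_›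
  obtain ⟨a, ha_root, ha⟩ := hensel (residue R)
    residue_surjective ((minpoly (ZMod p) α).map ι) ((minpoly.monic hint).map ι) α
    (by rw [eval₂_map]; exact minpoly.aeval _ _)
    (by rw [derivative_map, eval₂_map]; exact hsep.aeval_derivative_ne_zero (minpoly.aeval _ _))
  refine ⟨_, minpoly.monic hint, minpoly.irreducible hint,
    AdjoinRoot.lift ι a (by rwa [IsRoot, eval_map] at ha_root), ?_⟩
  have hadj : Algebra.adjoin (ZMod p) {α} = ⊤ := by
    rw [← IntermediateField.adjoin_simple_toSubalgebra_of_isAlgebraic hint.isAlgebraic, hα,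
      IntermediateField.top_toSubalgebra]
  intro y
  obtain ⟨q, rfl⟩ : y ∈ (aeval (R := ZMod p) α).range := by
    rw [← Algebra.adjoin_singleton_eq_range_aeval, hadj]; trivial
  refine ⟨AdjoinRoot.mk _ q, ?_⟩
  rw [RingHom.comp_apply, AdjoinRoot.lift_mk, hom_eval₂, ha]
  rfl

theorem RingHom.surjective_of_surjective_mod_span_nilpotent {A R : Type*} [CommRing A]
    [CommRing R] (f : A →+* R) {θ : R} (hθ : θ ∈ f.range) (hθn : IsNilpotent θ)
    (hf : Function.Surjective ((Ideal.Quotient.mk (Ideal.span {θ})).comp f)) :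
    Function.Surjective f := by
  obtain ⟨t, rfl⟩ := hθ
  have approx : ∀ n (r : R), ∃ a, r - f a ∈ Ideal.span {f t ^ n} := by
    intro n
    induction n with
    | zero => exact fun r => ⟨0, by simp⟩
    | succ n ih =>
      intro r
      obtain ⟨a, ha⟩ := ih r
      obtain ⟨c, hc⟩ := Ideal.mem_span_singleton'.mp ha
      obtain ⟨b, hb⟩ := hf (Ideal.Quotient.mk _ c)
      obtain ⟨d, hd⟩ := Ideal.mem_span_singleton'.mp (Ideal.Quotient.eq.mp hb.symm)
      refine ⟨a + b * t ^ n, Ideal.mem_span_singleton'.mpr ⟨d, ?_⟩⟩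
      rw [map_add, map_mul, map_pow]
      linear_combination f t ^ n * hd + hc
  obtain ⟨n, hn⟩ := hθn
  intro r
  obtain ⟨a, ha⟩ := approx n r
  rw [hn, Ideal.span_singleton_eq_bot.mpr rfl, Ideal.mem_bot, sub_eq_zero] at ha
  exact ⟨a, ha.symm⟩

theorem IsLocalRing.ker_eval₂RingHom_eq_span_X_pow {K R : Type*} [Field K] [CommRing R]
    [IsLocalRing R] (φ : K →+* R) {θ : R} (hθ : θ ∈ maximalIdeal R) {s : ℕ} (hs : θ ^ s ≠ 0)
    (hs1 : θ ^ (s + 1) = 0) :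
    RingHom.ker (eval₂RingHom φ θ) = Ideal.span {X ^ (s + 1)} := by
  refine le_antisymm (fun F hF => ?_) ?_
  · rw [Ideal.mem_span_singleton]
    rcases eq_or_ne F 0 with rfl | hF0
    · exact dvd_zero _
    obtain ⟨G, hFG, hG⟩ := F.exists_eq_pow_rootMultiplicity_mul_and_not_dvd hF0 0
    generalize F.rootMultiplicity 0 = t at hFG
    subst hFG
    rw [map_zero, sub_zero] at hG hF ⊢
    have hunit : IsUnit (G.eval₂ φ θ) := by
      rw [← residue_ne_zero_iff_isUnit, hom_eval₂, (residue_eq_zero_iff θ).mpr hθ, eval₂_at_zero]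
      exact (_root_.map_ne_zero _).mpr (mt X_dvd_iff.mpr hG)
    rw [RingHom.mem_ker, coe_eval₂RingHom, eval₂_mul, eval₂_X_pow, hunit.mul_left_eq_zero] at hF
    refine dvd_mul_of_dvd_left (pow_dvd_pow X ?_) _
    by_contra! h
    exact hs (pow_eq_zero_of_le (Nat.lt_succ_iff.mp h) hF)
  · rw [Ideal.span_le, Set.singleton_subset_iff, SetLike.mem_coe, RingHom.mem_ker,
      coe_eval₂RingHom, eval₂_X_pow, hs1]

theorem Polynomial.comap_mapRingHom_span_X_pow {A B : Type*} [CommRing A] [CommRing B]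
    {f : A →+* B} (hf : Function.Surjective f) (n : ℕ) :
    (Ideal.span {X ^ n}).comap (mapRingHom f) = Ideal.span {X ^ n} ⊔ (RingHom.ker f).map C := by
  have : Ideal.span {(X : B[X]) ^ n} = (Ideal.span {X ^ n}).map (mapRingHom f) := by
    rw [Ideal.map_span, Set.image_singleton, map_pow, coe_mapRingHom, map_X]
  rw [this, Ideal.comap_map_of_surjective _ (map_surjective f hf), ← RingHom.ker_eq_comap_bot,
    ker_mapRingHom]

theorem AdjoinRoot.ker_mk {R : Type*} [CommRing R] (g : R[X]) :
    RingHom.ker (AdjoinRoot.mk g) = Ideal.span {g} :=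
  Ideal.mk_ker

theorem Ideal.exists_eq_span_singleton_pow_ne_zero_pow_succ_eq_zero {R : Type*} [CommRing R]
    (I : Ideal R) [I.IsPrincipal] {s : ℕ} (h : I ^ (s + 1) = ⊥) (h' : I ^ s ≠ ⊥) :
    ∃ θ, I = Ideal.span {θ} ∧ θ ^ s ≠ 0 ∧ θ ^ (s + 1) = 0 := by
  obtain ⟨θ, hθ⟩ := Submodule.IsPrincipal.principal I
  have hpow : ∀ n, I ^ n = Ideal.span {θ ^ n} := fun n => by
    rw [hθ, Ideal.submodule_span_eq, Ideal.span_singleton_pow]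
  exact ⟨θ, hθ, fun h0 => h' (by rw [hpow, h0, Ideal.span_singleton_eq_bot]),
    Ideal.span_singleton_eq_bot.mp (hpow (s + 1) ▸ h)⟩

/-- Theorem 3.2 (⇒ direction): every finite commutative local principal ideal ring of
characteristic `p` whose maximal ideal has nilpotency index `s + 1` is isomorphic to
a quotient `ℤ_p[X,Y]/(Y^{s+1}, g(X) - ∑ⱼ vⱼ(X)·Y^{sⱼ})` with data as in the paper. -/
theorem finite_local_pir_char_p_iso_quotient_paperIdealQp
    (p s : ℕ) (hp : p.Prime)
    (R : Type*) [CommRing R] [IsLocalRing R] [Finite R] [CharP R p]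
    (hpir : IsPrincipalIdealRing R)
    (hnil : (IsLocalRing.maximalIdeal R) ^ (s + 1) = ⊥)
    (hnil' : (IsLocalRing.maximalIdeal R) ^ s ≠ ⊥) :
    ∃ (m : ℕ) (g : Polynomial (ZMod p)) (v : Fin m → Polynomial (ZMod p)) (σ : Fin m → ℕ),
      g.Monic ∧ Irreducible g ∧
      (∀ j, ¬ g ∣ v j) ∧ (∀ j, (v j).degree < g.degree) ∧
      StrictMono σ ∧ (∀ j, 1 ≤ σ j) ∧ (∀ j, σ j ≤ s) ∧
      Nonempty (R ≃+* (Polynomial (Polynomial (ZMod p)) ⧸ paperIdealQp p s g v σ)) := by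
  have : Fact p.Prime := ⟨hp⟩
  have : HenselianLocalRing R := henselianLocalRing_of_pow_maximalIdeal_eq_bot hnil
  have := hpir.principal (maximalIdeal R)
  have : Finite (ResidueField R) := .of_surjective _ residue_surjective
  obtain ⟨θ, hθ, hθs, hθs1⟩ :=
    Ideal.exists_eq_span_singleton_pow_ne_zero_pow_succ_eq_zero (maximalIdeal R) hnil hnil'
  have hθM : θ ∈ maximalIdeal R := hθ ▸ Ideal.mem_span_singleton_self θ
  obtain ⟨g, hg_monic, hg_irr, φ, hφ⟩ := exists_adjoinRoot_hom_residue_surjective p R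
  have : Fact (Irreducible g) := ⟨hg_irr⟩
  have hmod_θ : Function.Surjective
      ((Ideal.Quotient.mk (Ideal.span {θ})).comp (eval₂RingHom φ θ)) := by
    rw [← hθ]
    intro y
    obtain ⟨c, rfl⟩ := hφ y
    exact ⟨C c, by rw [RingHom.comp_apply, coe_eval₂RingHom, eval₂_C]; rfl⟩
  have hsurj : Function.Surjective (eval₂RingHom φ θ) :=
    (eval₂RingHom φ θ).surjective_of_surjective_mod_span_nilpotent ⟨X, eval₂_X _ _⟩
      ⟨s + 1, hθs1⟩ hmod_θ
  let Φ := (eval₂RingHom φ θ).comp (mapRingHom (AdjoinRoot.mk g))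
  have hΦ : Function.Surjective Φ := hsurj.comp (map_surjective _ AdjoinRoot.mk_surjective)
  have hker : RingHom.ker Φ = paperIdealQp p s g Fin.elim0 Fin.elim0 := by
    rw [← RingHom.comap_ker, ker_eval₂RingHom_eq_span_X_pow φ hθM hθs hθs1,
      comap_mapRingHom_span_X_pow AdjoinRoot.mk_surjective, AdjoinRoot.ker_mk, Ideal.map_span,
      Set.image_singleton, ← Ideal.span_insert, paperIdealQp, Finset.univ_eq_empty,
      Finset.sum_empty, sub_zero]
  exact ⟨0, g, Fin.elim0, Fin.elim0, hg_monic, hg_irr, finZeroElim, finZeroElim,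
    fun i => i.elim0, finZeroElim, finZeroElim,
    ⟨(RingHom.quotientKerEquivOfSurjective hΦ).symm.trans (Ideal.quotEquivOfEq hker)⟩⟩
end

section
/- Let p be a prime and, for i = 1, 2, let g_i(X), u_i(X) ∈ ℤ_{p²}[X] with all coefficients in {0, 1, …, p−1}, g_i(X) monic with irreducible reduction modulo p, u_i(X) ≢ 0 (mod p) with deg u_i(X) < deg g_i(X). Set R_i = ℤ_{p²}[X, Y]/(g_i(X), Y² − p·u_i(X), pY) and K_i = ℤ_{p²}[X]/(p, g_i(X)). If R₁ is isomorphic to R₂ as a ring, then there exist a field isomorphism τ : K₁ → K₂ and a polynomial v₂(X) ∈ ℤ_{p²}[X] not in the ideal (p, g₂(X)) such that the equality \overline{u₂(X)} = \overline{v₂(X)}² · τ(\overline{u₁(X)}) holds in K₂, where overlines denote images in K₂ (respectively K₁) under the natural quotient maps. -/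
set_option synthInstance.maxHeartbeats 400000

open Polynomial

/-- The ring `R = ℤ_{p²}[X,Y]/(g(X), Y² − p·u(X), pY)`, with `ℤ_{p²}[X,Y]` modelled as
`Polynomial (Polynomial (ZMod (p^2)))`, the outer indeterminate being `Y` and the inner
one being `X`. -/
abbrev paperRingR (p : ℕ) (g u : Polynomial (ZMod (p ^ 2))) : Type :=
  Polynomial (Polynomial (ZMod (p ^ 2))) ⧸
    Ideal.span
      ({Polynomial.C g,
        Polynomial.X ^ 2 -
          (p : Polynomial (Polynomial (ZMod (p ^ 2)))) * Polynomial.C u,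
        (p : Polynomial (Polynomial (ZMod (p ^ 2)))) * Polynomial.X} :
        Set (Polynomial (Polynomial (ZMod (p ^ 2)))))

/-- The residue ring `K = ℤ_{p²}[X]/(p, g(X))`. -/
abbrev paperFieldK (p : ℕ) (g : Polynomial (ZMod (p ^ 2))) : Type :=
  Polynomial (ZMod (p ^ 2)) ⧸
    Ideal.span ({(p : Polynomial (ZMod (p ^ 2))), g} : Set (Polynomial (ZMod (p ^ 2))))

/-!
Sending `Y ↦ 0` gives a surjection `R → K` whose kernel `(p, Y)` has vanishing cube; since `K` is
a field, that kernel is the nilradical of `R`, so a ring isomorphism `φ : R₁ ≃ R₂` descends to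
`τ : K₁ ≃ K₂`. As `φ(Y)` lies in the kernel, `φ(Y) = p a + Y d`, whence
`p φ(u₁) = φ(Y)² = p u₂ d²`. Now `p ≠ 0` in `R₂` (otherwise `g₂ ∣ p` in `ℤ_{p²}[X]`, impossible
for irreducible `ḡ₂`) and every element of `R₂` outside the kernel is a unit, so cancelling `p`
and reducing gives `τ(ū₁) = ū₂ d̄²`. If `d̄ ≠ 0` take `v₂ = d̄⁻¹`; otherwise
`ū₁ = 0`, the same argument for `φ⁻¹` gives `ū₂ = 0`, and `v₂ = 1` works.
-/

namespace RingHom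

variable {R S : Type*} [CommRing R] [CommRing S] {f : R →+* S}

theorem isUnit_of_apply_ne_zero (hS : IsField S) (hf : Function.Surjective f)
    (hnil : ∀ x, f x = 0 → IsNilpotent x) {x : R} (hx : f x ≠ 0) : IsUnit x := by
  obtain ⟨fe, hfe⟩ := hS.mul_inv_cancel hx
  obtain ⟨e, rfl⟩ := hf fe
  have hunit : IsUnit (x * e) := by
    simpa using (hnil (1 - x * e) (by simp [hfe])).isUnit_one_sub
  exact isUnit_of_mul_isUnit_left hunit

theorem apply_eq_of_mul_eq_mul (hS : IsField S) (hf : Function.Surjective f)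
    (hnil : ∀ x, f x = 0 → IsNilpotent x) {a x y : R} (ha : a ≠ 0) (h : a * x = a * y) :
    f x = f y := by
  by_contra hne
  have hunit := isUnit_of_apply_ne_zero hS hf hnil (x := x - y) (by rwa [map_sub, sub_ne_zero])
  exact ha (hunit.mul_left_eq_zero.1 (by rw [mul_sub, h, sub_self]))

end RingHom

theorem RingEquiv.exists_comp_eq_of_eq_zero_iff_isNilpotent {R₁ R₂ K₁ K₂ : Type*} [CommRing R₁]
    [CommRing R₂] [CommRing K₁] [CommRing K₂] (φ : R₁ ≃+* R₂) {π₁ : R₁ →+* K₁} {π₂ : R₂ →+* K₂}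
    (h₁ : Function.Surjective π₁) (h₂ : Function.Surjective π₂)
    (hk₁ : ∀ x, π₁ x = 0 ↔ IsNilpotent x) (hk₂ : ∀ x, π₂ x = 0 ↔ IsNilpotent x) :
    ∃ τ : K₁ ≃+* K₂, ∀ x, τ (π₁ x) = π₂ (φ x) := by
  have hker : RingHom.ker π₁ = RingHom.ker (π₂.comp φ.toRingHom) := by
    ext x
    rw [RingHom.mem_ker, RingHom.mem_ker, RingHom.comp_apply, hk₁, hk₂,
      RingEquiv.toRingHom_eq_coe, RingHom.coe_coe, IsNilpotent.map_iff φ.injective]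
  refine ⟨(π₁.quotientKerEquivOfSurjective h₁).symm.trans ((Ideal.quotEquivOfEq hker).trans
    ((π₂.comp φ.toRingHom).quotientKerEquivOfSurjective (h₂.comp φ.surjective))), fun x => ?_⟩
  simp only [RingEquiv.trans_apply, RingHom.quotientKerEquivOfSurjective_symm_apply,
    Ideal.quotEquivOfEq_mk, RingHom.quotientKerEquivOfSurjective_apply_mk]
  rfl

theorem exists_ne_zero_eq_sq_mul {K : Type*} [CommRing K] (hK : IsField K) {a b d : K}
    (h : a = b * d ^ 2) (h0 : a = 0 → b = 0) : ∃ v ≠ 0, b = v ^ 2 * a := by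
  have : Nontrivial K := ⟨hK.exists_pair_ne⟩
  by_cases hd : d = 0
  · exact ⟨1, one_ne_zero, by simp [h0 (by simp [h, hd]), h, hd]⟩
  · obtain ⟨e, hde⟩ := hK.mul_inv_cancel hd
    exact ⟨e, right_ne_zero_of_mul_eq_one hde,
      by linear_combination (-(d * e) - 1) * b * hde - e ^ 2 * h⟩

abbrev ZMod.castPowTwo (p : ℕ) : ZMod (p ^ 2) →+* ZMod p :=
  ZMod.castHom (dvd_pow_self p two_ne_zero) (ZMod p)

namespace ZMod

variable {p : ℕ}

theorem castPowTwo_eq_zero_iff (a : ZMod (p ^ 2)) :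
    castPowTwo p a = 0 ↔ (p : ZMod (p ^ 2)) ∣ a := by
  refine ⟨fun h => ?_, fun ⟨b, hb⟩ => by simp [hb]⟩
  obtain ⟨k, rfl⟩ := ZMod.intCast_surjective a
  rw [map_intCast, ZMod.intCast_zmod_eq_zero_iff_dvd] at h
  obtain ⟨m, rfl⟩ := h
  exact ⟨m, by push_cast; rfl⟩

theorem ker_castPowTwo : RingHom.ker (castPowTwo p) = Ideal.span {(p : ZMod (p ^ 2))} := by
  ext a
  rw [RingHom.mem_ker, castPowTwo_eq_zero_iff, Ideal.mem_span_singleton]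

theorem natCast_mul_eq_zero_iff_castPowTwo_eq_zero (hp : p ≠ 0) (a : ZMod (p ^ 2)) :
    (p : ZMod (p ^ 2)) * a = 0 ↔ castPowTwo p a = 0 := by
  obtain ⟨k, rfl⟩ := ZMod.intCast_surjective a
  rw [map_intCast, ← Int.cast_natCast, ← Int.cast_mul, ZMod.intCast_zmod_eq_zero_iff_dvd,
    ZMod.intCast_zmod_eq_zero_iff_dvd, Nat.cast_pow, pow_two,
    mul_dvd_mul_iff_left (by exact_mod_cast hp)]

end ZMod

namespace Polynomial

variable {p : ℕ}

theorem ker_mapRingHom_castPowTwo :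
    RingHom.ker (mapRingHom (ZMod.castPowTwo p)) = Ideal.span {(p : (ZMod (p ^ 2))[X])} := by
  rw [ker_mapRingHom, ZMod.ker_castPowTwo, Ideal.map_span, Set.image_singleton, map_natCast]

theorem natCast_mul_eq_zero_iff_map_castPowTwo_eq_zero (hp : p ≠ 0) (w : (ZMod (p ^ 2))[X]) :
    (p : (ZMod (p ^ 2))[X]) * w = 0 ↔ w.map (ZMod.castPowTwo p) = 0 := by
  simp only [Polynomial.ext_iff, coeff_map, coeff_zero, ← C_eq_natCast, coeff_C_mul,
    ZMod.natCast_mul_eq_zero_iff_castPowTwo_eq_zero hp]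

theorem not_dvd_natCast_of_irreducible_map (hp : p.Prime) {g : (ZMod (p ^ 2))[X]}
    (hg : Irreducible (g.map (ZMod.castPowTwo p))) : ¬ g ∣ (p : (ZMod (p ^ 2))[X]) := by
  have : Fact p.Prime := ⟨hp⟩
  rintro ⟨h, hgh⟩
  have hh : h ∈ RingHom.ker (mapRingHom (ZMod.castPowTwo p)) := by
    have := congrArg (map (ZMod.castPowTwo p)) hgh
    rw [Polynomial.map_mul, Polynomial.map_natCast, CharP.cast_eq_zero, eq_comm,
      mul_eq_zero] at this
    exact this.resolve_left hg.ne_zero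
  obtain ⟨k, rfl⟩ := Ideal.mem_span_singleton'.1 (ker_mapRingHom_castPowTwo ▸ hh)
  have hk : (p : (ZMod (p ^ 2))[X]) * (1 - g * k) = 0 := by linear_combination hgh
  rw [natCast_mul_eq_zero_iff_map_castPowTwo_eq_zero hp.ne_zero, Polynomial.map_sub,
    Polynomial.map_one, Polynomial.map_mul, sub_eq_zero] at hk
  exact hg.not_isUnit (IsUnit.of_mul_eq_one _ hk.symm)

theorem span_natCast_pair_eq_comap (g : (ZMod (p ^ 2))[X]) :
    Ideal.span {(p : (ZMod (p ^ 2))[X]), g} =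
      (Ideal.span {g.map (ZMod.castPowTwo p)}).comap (mapRingHom (ZMod.castPowTwo p)) := by
  rw [← coe_mapRingHom, ← Set.image_singleton, ← Ideal.map_span,
    Ideal.comap_map_of_surjective' _ (map_surjective _ (ZMod.castHom_surjective _)),
    ker_mapRingHom_castPowTwo, Ideal.span_insert, sup_comm]

end Polynomial

theorem paperFieldK.isMaximal {p : ℕ} (hp : p.Prime) {g : (ZMod (p ^ 2))[X]}
    (hg : Irreducible (g.map (ZMod.castPowTwo p))) :
    (Ideal.span {(p : (ZMod (p ^ 2))[X]), g}).IsMaximal := by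
  have : Fact p.Prime := ⟨hp⟩
  rw [Polynomial.span_natCast_pair_eq_comap]
  exact Ideal.comap_isMaximal_of_surjective _ (map_surjective _ (ZMod.castHom_surjective _))
    (H := PrincipalIdealRing.isMaximal_of_irreducible hg)

theorem paperFieldK.isField {p : ℕ} (hp : p.Prime) {g : (ZMod (p ^ 2))[X]}
    (hg : Irreducible (g.map (ZMod.castPowTwo p))) : IsField (paperFieldK p g) :=
  (Ideal.Quotient.maximal_ideal_iff_isField_quotient _).1 (paperFieldK.isMaximal hp hg)

namespace paperRingR

variable {p : ℕ} {g u : (ZMod (p ^ 2))[X]}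

variable (p g u) in
noncomputable def y : paperRingR p g u := Ideal.Quotient.mk _ X

variable (p g u) in
noncomputable def residue : paperRingR p g u →+* paperFieldK p g :=
  Ideal.Quotient.lift _ ((Ideal.Quotient.mk _).comp (evalRingHom 0)) fun a ha => by
    have hp : Ideal.Quotient.mk (Ideal.span {(p : (ZMod (p ^ 2))[X]), g}) p = 0 :=
      Ideal.Quotient.eq_zero_iff_mem.2 (Ideal.subset_span (by simp))
    have hg : Ideal.Quotient.mk (Ideal.span {(p : (ZMod (p ^ 2))[X]), g}) g = 0 :=
      Ideal.Quotient.eq_zero_iff_mem.2 (Ideal.subset_span (by simp))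
    refine RingHom.mem_ker.1 (Ideal.span_le.2 ?_ ha)
    simp [Set.insert_subset_iff, hp, hg]

theorem residue_mk (f : (ZMod (p ^ 2))[X][X]) :
    residue p g u (Ideal.Quotient.mk _ f) = Ideal.Quotient.mk _ (f.eval 0) :=
  Ideal.Quotient.lift_mk _ _ _

theorem residue_y : residue p g u (y p g u) = 0 := by
  simp [y, residue_mk]

theorem residue_mk_C (f : (ZMod (p ^ 2))[X]) :
    residue p g u (Ideal.Quotient.mk _ (C f)) = Ideal.Quotient.mk _ f := by
  rw [residue_mk, eval_C]

theorem residue_surjective : Function.Surjective (residue p g u) := fun x => by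
  obtain ⟨f, rfl⟩ := Ideal.Quotient.mk_surjective x
  exact ⟨_, residue_mk_C f⟩

theorem natCast_mul_y : (p : paperRingR p g u) * y p g u = 0 := by
  rw [y, ← map_natCast (Ideal.Quotient.mk _), ← map_mul, Ideal.Quotient.eq_zero_iff_mem]
  exact Ideal.subset_span (by simp)

theorem natCast_sq : (p : paperRingR p g u) ^ 2 = 0 := by
  rw [← Nat.cast_pow, ← map_natCast (algebraMap (ZMod (p ^ 2)) _), ZMod.natCast_self, map_zero]

theorem y_sq : y p g u ^ 2 = (p : paperRingR p g u) * Ideal.Quotient.mk _ (C u) := by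
  rw [y, ← map_natCast (Ideal.Quotient.mk _), ← map_pow, ← map_mul, Ideal.Quotient.eq]
  exact Ideal.subset_span (by simp)

theorem mk_C_g_eq_zero : (Ideal.Quotient.mk _ (C g) : paperRingR p g u) = 0 :=
  Ideal.Quotient.eq_zero_iff_mem.2 (Ideal.subset_span (by simp))

theorem exists_eq_of_residue_eq_zero {x : paperRingR p g u} (hx : residue p g u x = 0) :
    ∃ a d, x = (p : paperRingR p g u) * a + y p g u * d := by
  obtain ⟨f, rfl⟩ := Ideal.Quotient.mk_surjective x
  rw [residue_mk, Ideal.Quotient.eq_zero_iff_mem, Ideal.mem_span_pair] at hx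
  obtain ⟨a, b, hab⟩ := hx
  obtain ⟨d, hd⟩ := X_dvd_sub_C (p := f)
  refine ⟨Ideal.Quotient.mk _ (C a), Ideal.Quotient.mk _ d, ?_⟩
  rw [eq_add_of_sub_eq' hd, coeff_zero_eq_eval_zero, ← hab]
  simp only [map_add, map_mul, map_natCast, mk_C_g_eq_zero, y]
  ring

theorem pow_three_eq_zero_of_residue_eq_zero {x : paperRingR p g u}
    (hx : residue p g u x = 0) : x ^ 3 = 0 := by
  obtain ⟨a, d, rfl⟩ := exists_eq_of_residue_eq_zero hx
  linear_combination ((p : paperRingR p g u) * a ^ 3 + 3 * a ^ 2 * y p g u * d) * natCast_sq +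
    (3 * a * d ^ 2 * y p g u + Ideal.Quotient.mk _ (C u) * d ^ 3) * natCast_mul_y +
    (y p g u * d ^ 3) * y_sq

theorem exists_sq_eq_of_residue_eq_zero {x : paperRingR p g u} (hx : residue p g u x = 0) :
    ∃ d, x ^ 2 = (p : paperRingR p g u) * (Ideal.Quotient.mk _ (C u) * d ^ 2) := by
  obtain ⟨a, d, rfl⟩ := exists_eq_of_residue_eq_zero hx
  exact ⟨d, by linear_combination a ^ 2 * natCast_sq + 2 * a * d * natCast_mul_y + d ^ 2 * y_sq⟩

theorem dvd_natCast_of_natCast_eq_zero (h : (p : paperRingR p g u) = 0) :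
    g ∣ (p : (ZMod (p ^ 2))[X]) := by
  rw [← map_natCast (Ideal.Quotient.mk _), Ideal.Quotient.eq_zero_iff_mem,
    Ideal.mem_span_insert] at h
  obtain ⟨a, z, hz, hpz⟩ := h
  obtain ⟨b, e, rfl⟩ := Ideal.mem_span_pair.1 hz
  have hpz' : C (p : (ZMod (p ^ 2))[X]) =
      C g * a + X ^ 2 * b - C (p * u) * b + C (p : (ZMod (p ^ 2))[X]) * (X * e) := by
    rw [C_mul, map_natCast]
    linear_combination hpz
  -- `f ↦ f₀ + p·u·f₂` (coefficients in `Y`) kills `Y² − p·u` and `p·Y` and maps `(g)` into `(g)`.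
  have h0 := congrArg (coeff · 0) hpz'
  have h2 := congrArg (coeff · 2) hpz'
  simp only [coeff_add, coeff_sub, coeff_C_mul, coeff_X_pow_mul', coeff_X_mul, coeff_C,
    mul_coeff_zero] at h0 h2
  norm_num at h0 h2
  have hsq : (p : (ZMod (p ^ 2))[X]) ^ 2 = 0 := by rw [← Nat.cast_pow, CharP.cast_eq_zero]
  exact ⟨a.coeff 0 + p * u * a.coeff 2, by
    linear_combination h0 + p * u * h2 + (u * e.coeff 1 - u ^ 2 * b.coeff 2) * hsq⟩

theorem residue_eq_zero_iff (hp : p.Prime) (hg : Irreducible (g.map (ZMod.castPowTwo p)))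
    (x : paperRingR p g u) : residue p g u x = 0 ↔ IsNilpotent x := by
  refine ⟨fun hx => ⟨3, pow_three_eq_zero_of_residue_eq_zero hx⟩, fun hx => ?_⟩
  have := (paperFieldK.isField hp hg).isDomain
  exact (hx.map _).eq_zero

theorem natCast_ne_zero (hp : p.Prime) (hg : Irreducible (g.map (ZMod.castPowTwo p))) :
    (p : paperRingR p g u) ≠ 0 :=
  fun h => Polynomial.not_dvd_natCast_of_irreducible_map hp hg (dvd_natCast_of_natCast_eq_zero h)

theorem exists_ringEquiv_residue_comp {g₁ u₁ g₂ u₂ : (ZMod (p ^ 2))[X]} (hp : p.Prime)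
    (hg₁ : Irreducible (g₁.map (ZMod.castPowTwo p)))
    (hg₂ : Irreducible (g₂.map (ZMod.castPowTwo p)))
    (φ : paperRingR p g₁ u₁ ≃+* paperRingR p g₂ u₂) :
    ∃ τ : paperFieldK p g₁ ≃+* paperFieldK p g₂,
      ∀ x, τ (residue p g₁ u₁ x) = residue p g₂ u₂ (φ x) :=
  RingEquiv.exists_comp_eq_of_eq_zero_iff_isNilpotent (R₁ := paperRingR p g₁ u₁)
    (R₂ := paperRingR p g₂ u₂) φ residue_surjective residue_surjective
    (residue_eq_zero_iff hp hg₁) (residue_eq_zero_iff hp hg₂)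

theorem exists_apply_mk_eq_mk_mul_sq {g₁ u₁ g₂ u₂ : (ZMod (p ^ 2))[X]} (hp : p.Prime)
    (hg₂ : Irreducible (g₂.map (ZMod.castPowTwo p)))
    (φ : paperRingR p g₁ u₁ ≃+* paperRingR p g₂ u₂) (τ : paperFieldK p g₁ ≃+* paperFieldK p g₂)
    (hτ : ∀ x, τ (residue p g₁ u₁ x) = residue p g₂ u₂ (φ x)) :
    ∃ d, τ (Ideal.Quotient.mk _ u₁) = Ideal.Quotient.mk _ u₂ * d ^ 2 := by
  obtain ⟨d, hd⟩ := exists_sq_eq_of_residue_eq_zero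
    (show residue p g₂ u₂ (φ (y p g₁ u₁)) = 0 by rw [← hτ, residue_y, map_zero])
  have hpu : (p : paperRingR p g₂ u₂) * φ (Ideal.Quotient.mk _ (C u₁)) =
      (p : paperRingR p g₂ u₂) * (Ideal.Quotient.mk _ (C u₂) * d ^ 2) := by
    rw [← hd, ← map_pow φ, y_sq, map_mul, map_natCast φ]
  refine ⟨residue p g₂ u₂ d, ?_⟩
  rw [← residue_mk_C (u := u₁), hτ, RingHom.apply_eq_of_mul_eq_mul (paperFieldK.isField hp hg₂)
    residue_surjective (fun x => (residue_eq_zero_iff hp hg₂ x).1) (natCast_ne_zero hp hg₂) hpu,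
    map_mul, map_pow, residue_mk_C]

end paperRingR

/-- Proposition 4.4 (1): if `R₁ = ℤ_{p²}[X,Y]/(g₁, Y² − p·u₁, pY)` and
`R₂ = ℤ_{p²}[X,Y]/(g₂, Y² − p·u₂, pY)` are isomorphic rings, then there are a field
isomorphism `τ : K₁ → K₂` of the residue fields `Kᵢ = ℤ_{p²}[X]/(p, gᵢ)` and a
polynomial `v₂(X) ∉ (p, g₂(X))` with `u₂(X) = v₂(X)² · τ(u₁(X))` in `K₂` (overlines,
i.e. the quotient maps, being implicit). -/
theorem paperRingR_iso_implies
    (p : ℕ) (hp : p.Prime)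
    (g₁ g₂ u₁ u₂ : Polynomial (ZMod (p ^ 2)))
    (hg₁irr : Irreducible
      (g₁.map (ZMod.castHom (dvd_pow_self p (by norm_num : (2:ℕ) ≠ 0)) (ZMod p))))
    (hg₂irr : Irreducible
      (g₂.map (ZMod.castHom (dvd_pow_self p (by norm_num : (2:ℕ) ≠ 0)) (ZMod p))))
    (hiso : Nonempty (paperRingR p g₁ u₁ ≃+* paperRingR p g₂ u₂)) :
    ∃ (τ : paperFieldK p g₁ ≃+* paperFieldK p g₂) (v₂ : Polynomial (ZMod (p ^ 2))),
      v₂ ∉ Ideal.span ({(p : Polynomial (ZMod (p ^ 2))), g₂} : Set (Polynomial (ZMod (p ^ 2)))) ∧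
      Ideal.Quotient.mk
          (Ideal.span ({(p : Polynomial (ZMod (p ^ 2))), g₂} : Set (Polynomial (ZMod (p ^ 2)))))
          u₂ =
        (Ideal.Quotient.mk
          (Ideal.span ({(p : Polynomial (ZMod (p ^ 2))), g₂} : Set (Polynomial (ZMod (p ^ 2)))))
          v₂) ^ 2 *
        τ (Ideal.Quotient.mk
          (Ideal.span ({(p : Polynomial (ZMod (p ^ 2))), g₁} : Set (Polynomial (ZMod (p ^ 2)))))
          u₁) := by
  obtain ⟨φ⟩ := hiso
  obtain ⟨τ, hτ⟩ := paperRingR.exists_ringEquiv_residue_comp hp hg₁irr hg₂irr φ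
  obtain ⟨d, hd⟩ := paperRingR.exists_apply_mk_eq_mk_mul_sq hp hg₂irr φ τ hτ
  obtain ⟨d', hd'⟩ := paperRingR.exists_apply_mk_eq_mk_mul_sq hp hg₁irr φ.symm τ.symm fun x => by
    rw [RingEquiv.symm_apply_eq, hτ, RingEquiv.apply_symm_apply]
  obtain ⟨v, hv, hvu⟩ := exists_ne_zero_eq_sq_mul (K := paperFieldK p g₂)
      (paperFieldK.isField hp hg₂irr) hd fun h => by
    rw [map_eq_zero_iff τ τ.injective] at h
    rwa [h, zero_mul, map_eq_zero_iff _ τ.symm.injective] at hd'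
  obtain ⟨v₂, rfl⟩ := Ideal.Quotient.mk_surjective v
  exact ⟨τ, v₂, fun h => hv (Ideal.Quotient.eq_zero_iff_mem.2 h), hvu⟩
end

section
/- Let p be a prime and let g(X), u₁(X), u₂(X) ∈ ℤ_{p²}[X] with all coefficients in {0, 1, …, p−1}, where g(X) is monic with irreducible reduction modulo p, and u₁(X), u₂(X) ≢ 0 (mod p) with deg u_i(X) < deg g(X). Set R_i = ℤ_{p²}[X, Y]/(g(X), Y² − p·u_i(X), pY) for i = 1, 2, and K = ℤ_{p²}[X]/(p, g(X)). If there exist polynomials v₁(X), v₂(X) ∈ ℤ_{p²}[X] such that \overline{u₂(X)} = \overline{v₂(X)}² · \overline{u₁(X)} and \overline{u₁(X)} = \overline{v₁(X)}² · \overline{u₂(X)} hold in K, then R₁ is isomorphic to R₂ as a ring. -/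
/-!
Because `K` is a field, the two relations give a unit `t` of `K` with `ū₂ = t² ū₁` (namely
`t = v̄₂`, or `t = 1` when `ū₂ = 0 = ū₁`). For lifts `a, b` of `t, t⁻¹`, the substitutions
`Y ↦ bY` and `Y ↦ aY` are mutually inverse isomorphisms `R₁ ≃ R₂`: they respect the relations since
`(aY)² − p u₂ = a² (Y² − p u₁) + p (a² u₁ − u₂)` and `p · (p, g) ⊆ (g)` as `p² = 0`, and their
composites are identities because `(ab − 1) Y ∈ (pY, g)`.
-/

set_option synthInstance.maxHeartbeats 400000

open Polynomial

theorem ZMod.ker_castHom {m n : ℕ} (h : m ∣ n) :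
    RingHom.ker (ZMod.castHom h (ZMod m)) = Ideal.span {(m : ZMod n)} := by
  ext a
  obtain ⟨k, rfl⟩ := ZMod.intCast_surjective a
  rw [RingHom.mem_ker, map_intCast, ZMod.intCast_zmod_eq_zero_iff_dvd, Ideal.mem_span_singleton]
  constructor
  · rintro ⟨j, rfl⟩
    exact ⟨j, by push_cast; rfl⟩
  · rintro ⟨b, hb⟩
    obtain ⟨j, rfl⟩ := ZMod.intCast_surjective b
    have hdiv : (n : ℤ) ∣ k - m * j := by
      rw [← ZMod.intCast_zmod_eq_zero_iff_dvd]; push_cast; rw [hb, sub_self]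
    exact (dvd_sub_left (dvd_mul_right _ _)).mp ((Int.natCast_dvd_natCast.mpr h).trans hdiv)

theorem Polynomial.isMaximal_span_C_pair_of_irreducible_map {R k : Type*} [CommRing R] [Field k]
    {φ : R →+* k} (hφ : Function.Surjective φ) {c : R} (hker : RingHom.ker φ = Ideal.span {c})
    {g : R[X]} (hg : Irreducible (g.map φ)) : (Ideal.span {C c, g}).IsMaximal := by
  have : (Ideal.span {g.map φ}).IsMaximal := PrincipalIdealRing.isMaximal_of_irreducible hg
  have hspan : Ideal.span {C c, g} = (Ideal.span {g.map φ}).comap (mapRingHom φ) := by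
    rw [← Set.image_singleton, ← coe_mapRingHom, ← Ideal.map_span,
      Ideal.comap_map_of_surjective _ (map_surjective φ hφ), ← RingHom.ker_eq_comap_bot,
      ker_mapRingHom, hker, Ideal.map_span, Set.image_singleton, Ideal.span_insert, sup_comm]
  rw [hspan]
  exact Ideal.comap_isMaximal_of_surjective _ (map_surjective φ hφ)

theorem exists_unit_eq_sq_mul {K : Type*} [GroupWithZero K] {a b x y : K}
    (ha : a = x ^ 2 * b) (hb : b = y ^ 2 * a) : ∃ t : Kˣ, a = t ^ 2 * b := by
  by_cases ha0 : a = 0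
  · exact ⟨1, by simp [hb, ha0]⟩
  · have hx : x ≠ 0 := by rintro rfl; simp [ha] at ha0
    exact ⟨Units.mk0 x hx, ha⟩

section SquareRel

variable {A : Type*} [CommRing A] {c g : A}

/-- With `A = ℤ_{p²}[X]` and `c = p`, `R_u = A[Y] ⧸ squareRelIdeal c g u`. -/
noncomputable def squareRelIdeal (c g u : A) : Ideal A[X] :=
  Ideal.span {C g, X ^ 2 - C c * C u, C c * X}

theorem subset_squareRelIdeal (u : A) :
    {C g, X ^ 2 - C c * C u, C c * X} ⊆ (squareRelIdeal c g u : Set A[X]) :=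
  Ideal.subset_span

theorem C_mul_X_mem_squareRelIdeal {z : A} (hz : z ∈ Ideal.span {c, g}) (u : A) :
    C z * X ∈ squareRelIdeal c g u := by
  obtain ⟨a, b, rfl⟩ := Ideal.mem_span_pair.mp hz
  have : C (a * c + b * g) * X = C a * (C c * X) + C b * X * C g := by
    simp only [map_add, map_mul]; ring
  rw [this]
  exact add_mem (Ideal.mul_mem_left _ _ (subset_squareRelIdeal _ (by simp)))
    (Ideal.mul_mem_left _ _ (subset_squareRelIdeal _ (by simp)))

theorem C_mul_C_mem_squareRelIdeal (hc : c ^ 2 = 0) {z : A} (hz : z ∈ Ideal.span {c, g})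
    (u : A) : C c * C z ∈ squareRelIdeal c g u := by
  obtain ⟨a, b, rfl⟩ := Ideal.mem_span_pair.mp hz
  have : C c * C (a * c + b * g) = C (c * b) * C g := by
    rw [← map_mul, ← map_mul]
    congr 1
    linear_combination a * hc
  rw [this]
  exact Ideal.mul_mem_left _ _ (subset_squareRelIdeal _ (by simp))

theorem squareRelIdeal_le_comap_compRingHom (hc : c ^ 2 = 0) {u u' t : A}
    (h : Ideal.Quotient.mk (Ideal.span {c, g}) u =
      Ideal.Quotient.mk _ t ^ 2 * Ideal.Quotient.mk _ u') :
    squareRelIdeal c g u ≤ (squareRelIdeal c g u').comap (compRingHom (C t * X)) := by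
  have hmem : t ^ 2 * u' - u ∈ Ideal.span {c, g} := by
    rw [← Ideal.Quotient.eq_zero_iff_mem, map_sub, map_mul, map_pow, h, sub_self]
  rw [squareRelIdeal, Ideal.span_le]
  rintro y (rfl | rfl | rfl) <;>
    simp only [SetLike.mem_coe, Ideal.mem_comap, coe_compRingHom_apply]
  · simpa using subset_squareRelIdeal _ (by simp)
  · have : (X ^ 2 - C c * C u).comp (C t * X) =
        C (t ^ 2) * (X ^ 2 - C c * C u') + C c * C (t ^ 2 * u' - u) := by
      simp only [sub_comp, pow_comp, mul_comp, X_comp, C_comp, map_mul, map_sub, map_pow]; ring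
    rw [this]
    exact add_mem (Ideal.mul_mem_left _ _ (subset_squareRelIdeal _ (by simp)))
      (C_mul_C_mem_squareRelIdeal hc hmem u')
  · have : (C c * X).comp (C t * X) = C t * (C c * X) := by
      simp only [mul_comp, X_comp, C_comp]; ring
    rw [this]
    exact Ideal.mul_mem_left _ _ (subset_squareRelIdeal _ (by simp))

theorem mk_comp_compRingHom_C_mul_X_of_eq_one {r : A}
    (hr : Ideal.Quotient.mk (Ideal.span {c, g}) r = 1) (u : A) :
    (Ideal.Quotient.mk (squareRelIdeal c g u)).comp (compRingHom (C r * X)) =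
      Ideal.Quotient.mk _ := by
  have hmem : r - 1 ∈ Ideal.span {c, g} := by
    rw [← Ideal.Quotient.eq_zero_iff_mem, map_sub, hr, map_one, sub_self]
  refine Polynomial.ringHom_ext (fun a => by simp) ?_
  simp only [RingHom.coe_comp, Function.comp_apply, coe_compRingHom_apply, X_comp]
  have : C r * X - X = C (r - 1) * X := by simp only [map_sub, map_one]; ring
  rw [Ideal.Quotient.mk_eq_mk_iff_sub_mem, this]
  exact C_mul_X_mem_squareRelIdeal hmem u

theorem compRingHom_C_mul_X_comp (a b : A) :
    (compRingHom (C b * X)).comp (compRingHom (C a * X)) = compRingHom (C (a * b) * X) := by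
  refine RingHom.ext fun p => ?_
  simp only [RingHom.coe_comp, Function.comp_apply, coe_compRingHom_apply, comp_assoc, mul_comp,
    C_comp, X_comp, map_mul]
  ring_nf

theorem quotientMap_compRingHom_comp_quotientMap_eq_id {u u' a b : A}
    (hab : Ideal.Quotient.mk (Ideal.span {c, g}) a * Ideal.Quotient.mk _ b = 1)
    (ha : squareRelIdeal c g u ≤ (squareRelIdeal c g u').comap (compRingHom (C a * X)))
    (hb : squareRelIdeal c g u' ≤ (squareRelIdeal c g u).comap (compRingHom (C b * X))) :
    (Ideal.quotientMap _ _ hb).comp (Ideal.quotientMap _ _ ha) = RingHom.id _ := by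
  apply Ideal.Quotient.ringHom_ext
  rw [RingHom.comp_assoc, Ideal.quotientMap_comp_mk, ← RingHom.comp_assoc,
    Ideal.quotientMap_comp_mk, RingHom.comp_assoc, compRingHom_C_mul_X_comp,
    mk_comp_compRingHom_C_mul_X_of_eq_one (by rw [map_mul, hab]), RingHom.id_comp]

noncomputable def squareRelQuotEquiv (hc : c ^ 2 = 0) {u u' t s : A}
    (hts : Ideal.Quotient.mk (Ideal.span {c, g}) t * Ideal.Quotient.mk _ s = 1)
    (hu : Ideal.Quotient.mk (Ideal.span {c, g}) u' =
      Ideal.Quotient.mk _ t ^ 2 * Ideal.Quotient.mk _ u) :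
    A[X] ⧸ squareRelIdeal c g u ≃+* A[X] ⧸ squareRelIdeal c g u' :=
  have hu' : Ideal.Quotient.mk (Ideal.span {c, g}) u =
      Ideal.Quotient.mk _ s ^ 2 * Ideal.Quotient.mk _ u' := by
    linear_combination (-Ideal.Quotient.mk _ s ^ 2) * hu -
      Ideal.Quotient.mk _ u * (Ideal.Quotient.mk _ t * Ideal.Quotient.mk _ s + 1) * hts
  RingEquiv.ofRingHom
    (Ideal.quotientMap _ _ (squareRelIdeal_le_comap_compRingHom hc hu'))
    (Ideal.quotientMap _ _ (squareRelIdeal_le_comap_compRingHom hc hu))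
    (quotientMap_compRingHom_comp_quotientMap_eq_id hts _ _)
    (quotientMap_compRingHom_comp_quotientMap_eq_id (by rw [mul_comm, hts]) _ _)

end SquareRel

/-- Proposition 4.4 (2): with `g₁ = g₂ = g`, if there are `v₁(X), v₂(X) ∈ ℤ_{p²}[X]`
with `u₂ = v₂² · u₁` and `u₁ = v₁² · u₂` in `K = ℤ_{p²}[X]/(p, g)`, then
`R₁ = ℤ_{p²}[X,Y]/(g, Y² − p·u₁, pY)` and `R₂ = ℤ_{p²}[X,Y]/(g, Y² − p·u₂, pY)`
are isomorphic rings. -/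
theorem paperRingR_iso_of_square_relation
    (p : ℕ) (hp : p.Prime)
    (g u₁ u₂ : Polynomial (ZMod (p ^ 2)))
    (hgirr : Irreducible
      (g.map (ZMod.castHom (dvd_pow_self p (by norm_num : (2:ℕ) ≠ 0)) (ZMod p))))
    (v₁ v₂ : Polynomial (ZMod (p ^ 2)))
    (hv₂ : Ideal.Quotient.mk
        (Ideal.span ({(p : Polynomial (ZMod (p ^ 2))), g} : Set (Polynomial (ZMod (p ^ 2)))))
        u₂ =
      (Ideal.Quotient.mk
        (Ideal.span ({(p : Polynomial (ZMod (p ^ 2))), g} : Set (Polynomial (ZMod (p ^ 2)))))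
        v₂) ^ 2 *
      Ideal.Quotient.mk
        (Ideal.span ({(p : Polynomial (ZMod (p ^ 2))), g} : Set (Polynomial (ZMod (p ^ 2)))))
        u₁)
    (hv₁ : Ideal.Quotient.mk
        (Ideal.span ({(p : Polynomial (ZMod (p ^ 2))), g} : Set (Polynomial (ZMod (p ^ 2)))))
        u₁ =
      (Ideal.Quotient.mk
        (Ideal.span ({(p : Polynomial (ZMod (p ^ 2))), g} : Set (Polynomial (ZMod (p ^ 2)))))
        v₁) ^ 2 *
      Ideal.Quotient.mk
        (Ideal.span ({(p : Polynomial (ZMod (p ^ 2))), g} : Set (Polynomial (ZMod (p ^ 2)))))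
        u₂) :
    Nonempty (paperRingR p g u₁ ≃+* paperRingR p g u₂) := by
  have : Fact p.Prime := ⟨hp⟩
  have hmax := isMaximal_span_C_pair_of_irreducible_map (ZMod.castHom_surjective _)
    (ZMod.ker_castHom _) hgirr
  rw [C_eq_natCast] at hmax
  let : Field (paperFieldK p g) := Ideal.Quotient.field _
  obtain ⟨t, ht⟩ := exists_unit_eq_sq_mul hv₂ hv₁
  obtain ⟨a, ha⟩ := Ideal.Quotient.mk_surjective (t : paperFieldK p g)
  obtain ⟨b, hb⟩ := Ideal.Quotient.mk_surjective (↑t⁻¹ : paperFieldK p g)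
  have hp2 : (p : Polynomial (ZMod (p ^ 2))) ^ 2 = 0 := by
    rw [← Nat.cast_pow, CharP.cast_eq_zero]
  unfold paperRingR
  rw [← C_eq_natCast]
  exact ⟨squareRelQuotEquiv (t := a) (s := b) hp2 (by rw [ha, hb, Units.mul_inv])
    (by rw [ht, ha])⟩
end

section
/- Let p be a prime and, for i = 1, 2, let g_i(X) ∈ ℤ_{p²}[X] be monic with irreducible reduction modulo p and all coefficients in {0, 1, …, p−1}, and let u₁(X), u₃(X) and u₂(X), u₄(X) be polynomials in ℤ_{p²}[X] with coefficients in {0, 1, …, p−1}, not ≡ 0 (mod p), with deg u₁, deg u₃ < deg g₁ and deg u₂, deg u₄ < deg g₂. Set R₁ = ℤ_{p²}[X, Y]/(g₁(X) − u₃(X)Y, Y² − p·u₁(X), pY), R₂ = ℤ_{p²}[X, Y]/(g₂(X) − u₄(X)Y, Y² − p·u₂(X), pY), and K_i = ℤ_{p²}[X]/(p, g_i(X)). If σ : R₁ → R₂ is a ring isomorphism, then σ induces a field isomorphism τ : K₁ → K₂ and there exist polynomials v₂(X), u₅(X) ∈ ℤ_{p²}[X] not in the ideal (p, g₂(X)) such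 that σ(\overline{g₁(X)}) = \overline{u₅(X)} · \overline{g₂(X)} holds in R₂ and \overline{u₂(X)} = \overline{v₂(X)}² · τ(\overline{u₁(X)}) holds in K₂. -/
/-!
Write `A = ℤ_{p²}[X]`, `𝔪 = (p, g) ⊂ A` and `w = u·u'²`. Since `u'` is a unit modulo `𝔪`
and `𝔪³` vanishes in `R = A[Y]/(g − u'Y, Y² − pu, pY)`, the relation `g = u'Y` gives
`Y = u'⁻¹g`, so `A → R` is onto, with kernel `J = (pg, g² − pw)`. Hence `R` is local with
residue field `K = A/𝔪`; its maximal ideal is generated by `g` (as `p ≡ w⁻¹g²` mod `J`) and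
is exactly the annihilator of `p`. A ring isomorphism `σ` therefore induces `τ : K₁ ≃ K₂`.
Moreover `p·σ(g₁) = 0`, so `σ(g₁) = u₅g₂`, and comparing `σ(g₁)² = p·σ(u₁u₃²)` with
`(u₅g₂)² = p·u₅²u₂u₄²` gives `u₅²u₂u₄² = τ(u₁u₃²)` in `K₂`; take `v₂ = τ(u₃)/(u₅u₄)`.
-/

set_option synthInstance.maxHeartbeats 400000

open Polynomial

/-- The ideal `(g(X) − u'(X)·Y, Y² − p·u(X), pY)` of `ℤ_{p²}[X,Y]`, the latter modelled
as `Polynomial (Polynomial (ZMod (p^2)))`, the outer indeterminate being `Y` and the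
inner one being `X`. -/
noncomputable def paperIdealI (p : ℕ) (g u' u : Polynomial (ZMod (p ^ 2))) :
    Ideal (Polynomial (Polynomial (ZMod (p ^ 2)))) :=
  Ideal.span
    ({Polynomial.C g - Polynomial.C u' * Polynomial.X,
      Polynomial.X ^ 2 -
        (p : Polynomial (Polynomial (ZMod (p ^ 2)))) * Polynomial.C u,
      (p : Polynomial (Polynomial (ZMod (p ^ 2)))) * Polynomial.X} :
      Set (Polynomial (Polynomial (ZMod (p ^ 2)))))

/-- The ideal `(p, g(X))` of `ℤ_{p²}[X]`; the quotient by it is the residue field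
`K = ℤ_{p²}[X]/(p, g(X))`. -/
noncomputable def paperIdealK (p : ℕ) (g : Polynomial (ZMod (p ^ 2))) :
    Ideal (Polynomial (ZMod (p ^ 2))) :=
  Ideal.span ({(p : Polynomial (ZMod (p ^ 2))), g} : Set (Polynomial (ZMod (p ^ 2))))

/-- The canonical map `ℤ_{p²}[X,Y] → K = ℤ_{p²}[X]/(p, g(X))` sending `Y ↦ 0` and
`X ↦ X̄`; composed with the quotient map `ℤ_{p²}[X,Y] → Rᵢ` being inverted, it gives
the residue map `πᵢ : Rᵢ → Kᵢ`. -/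
noncomputable def paperKappa (p : ℕ) (g : Polynomial (ZMod (p ^ 2))) :
    Polynomial (Polynomial (ZMod (p ^ 2))) →+* Polynomial (ZMod (p ^ 2)) ⧸ paperIdealK p g :=
  (Ideal.Quotient.mk (paperIdealK p g)).comp
    (Polynomial.evalRingHom (0 : Polynomial (ZMod (p ^ 2))))

section ResidueField

variable {p : ℕ}

local notation "𝔸" => Polynomial (ZMod (p ^ 2))
local notation "ρ" => ZMod.castHom (dvd_pow_self p two_ne_zero) (ZMod p)

lemma natCast_sq_eq_zero (S : Type*) [Semiring S] (n : ℕ) [CharP S (n ^ 2)] :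
    (n : S) ^ 2 = 0 := by
  rw [← Nat.cast_pow, CharP.cast_eq_zero]

lemma natCast_mem_paperIdealK (g : 𝔸) : (p : 𝔸) ∈ paperIdealK p g :=
  Ideal.subset_span (by simp)

lemma self_mem_paperIdealK (g : 𝔸) : g ∈ paperIdealK p g :=
  Ideal.subset_span (by simp)

/-- For `w = u·u'²` this is the kernel of `ℤ_{p²}[X] → ℤ_{p²}[X,Y]/(g − u'Y, Y² − pu, pY)`
(see `mk_C_eq_zero_iff`). -/
noncomputable def paperIdealJ (p : ℕ) (g w : Polynomial (ZMod (p ^ 2))) :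
    Ideal (Polynomial (ZMod (p ^ 2))) :=
  Ideal.span
    {(p : Polynomial (ZMod (p ^ 2))) * g, g ^ 2 - (p : Polynomial (ZMod (p ^ 2))) * w}

lemma natCast_mul_mem_paperIdealJ {g w x : 𝔸} (hx : x ∈ paperIdealK p g) :
    (p : 𝔸) * x ∈ paperIdealJ p g w := by
  obtain ⟨a, b, rfl⟩ := Ideal.mem_span_pair.mp hx
  refine Ideal.mem_span_pair.mpr ⟨b, 0, ?_⟩
  linear_combination -a * natCast_sq_eq_zero 𝔸 p

lemma pow_three_mem_paperIdealJ {g w x : 𝔸} (hx : x ∈ paperIdealK p g) :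
    x ^ 3 ∈ paperIdealJ p g w := by
  obtain ⟨a, b, rfl⟩ := Ideal.mem_span_pair.mp hx
  refine Ideal.mem_span_pair.mpr ⟨3 * a * b ^ 2 * g + b ^ 3 * w, b ^ 3 * g, ?_⟩
  linear_combination (-(a ^ 3 * p) - 3 * a ^ 2 * b * g) * natCast_sq_eq_zero 𝔸 p

variable [Fact p.Prime]

lemma castHom_eq_zero_iff_natCast_dvd (b : ZMod (p ^ 2)) :
    ρ b = 0 ↔ (p : ZMod (p ^ 2)) ∣ b := by
  refine ⟨fun hb => ?_, ?_⟩
  · obtain ⟨k, hk⟩ : p ∣ b.val := by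
      rwa [← ZMod.natCast_zmod_val b, map_natCast, ZMod.natCast_eq_zero_iff] at hb
    exact ⟨k, by rw [← ZMod.natCast_zmod_val b, hk, Nat.cast_mul]⟩
  · rintro ⟨c, rfl⟩
    rw [map_mul, map_natCast, ZMod.natCast_self, zero_mul]

lemma natCast_mul_eq_zero_iff_castHom_eq_zero (b : ZMod (p ^ 2)) :
    (p : ZMod (p ^ 2)) * b = 0 ↔ ρ b = 0 := by
  rw [← ZMod.natCast_zmod_val b, ← Nat.cast_mul, ZMod.natCast_eq_zero_iff, map_natCast,
    ZMod.natCast_eq_zero_iff]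
  simp only [pow_two, Nat.mul_dvd_mul_iff_left (Fact.out : p.Prime).pos]

lemma map_castHom_eq_zero_iff_natCast_dvd (f : 𝔸) : f.map ρ = 0 ↔ (p : 𝔸) ∣ f := by
  rw [← map_natCast C, C_dvd_iff_dvd_coeff, Polynomial.ext_iff]
  simp only [coeff_map, coeff_zero, castHom_eq_zero_iff_natCast_dvd]

lemma natCast_mul_eq_zero_iff_map_castHom_eq_zero (f : 𝔸) :
    (p : 𝔸) * f = 0 ↔ f.map ρ = 0 := by
  rw [← map_natCast C, Polynomial.ext_iff, Polynomial.ext_iff]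
  simp only [coeff_C_mul, coeff_map, coeff_zero, natCast_mul_eq_zero_iff_castHom_eq_zero]

lemma paperIdealK_eq_comap (g : 𝔸) :
    paperIdealK p g = (Ideal.span {g.map ρ}).comap (mapRingHom ρ) := by
  refine le_antisymm ?_ fun f hf => ?_
  · rw [paperIdealK, Ideal.span_le]
    rintro x (rfl | rfl)
    · simp
    · exact Ideal.subset_span rfl
  · obtain ⟨h', hh'⟩ := Ideal.mem_span_singleton'.mp hf
    obtain ⟨h, rfl⟩ := map_surjective ρ (ZMod.ringHom_surjective _) h'
    replace hh' : (h * g).map ρ = f.map ρ := by rw [Polynomial.map_mul]; exact hh'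
    obtain ⟨y, hy⟩ := (map_castHom_eq_zero_iff_natCast_dvd (f - h * g)).mp
      (by rw [Polynomial.map_sub, hh', sub_self])
    exact Ideal.mem_span_pair.mpr ⟨y, h, by linear_combination -hy⟩

lemma mem_paperIdealK_iff {g f : 𝔸} : f ∈ paperIdealK p g ↔ g.map ρ ∣ f.map ρ := by
  rw [paperIdealK_eq_comap, Ideal.mem_comap, coe_mapRingHom, Ideal.mem_span_singleton]

lemma isMaximal_paperIdealK {g : 𝔸} (hg : Irreducible (g.map ρ)) :
    (paperIdealK p g).IsMaximal := by
  rw [paperIdealK_eq_comap]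
  have := PrincipalIdealRing.isMaximal_of_irreducible hg
  exact Ideal.comap_isMaximal_of_surjective _ (map_surjective _ (ZMod.ringHom_surjective _))

lemma notMem_paperIdealK_of_degree_lt {g u : 𝔸} (hg : g.Monic) (hu : u.map ρ ≠ 0)
    (hdeg : u.degree < g.degree) : u ∉ paperIdealK p g := by
  rw [mem_paperIdealK_iff]
  intro hdvd
  have := (degree_le_of_dvd hdvd hu).trans degree_map_le
  rw [hg.degree_map] at this
  exact (this.trans_lt hdeg).false

lemma mem_paperIdealK_of_natCast_mul_mem {g w f : 𝔸} (hg : g.map ρ ≠ 0)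
    (h : (p : 𝔸) * f ∈ paperIdealJ p g w) : f ∈ paperIdealK p g := by
  obtain ⟨a, b, hab⟩ := Ideal.mem_span_pair.mp h
  obtain ⟨b, rfl⟩ : (p : 𝔸) ∣ b := by
    have hb : b.map ρ * g.map ρ ^ 2 = 0 := by
      simpa [Polynomial.map_natCast] using (congrArg (Polynomial.map ρ) hab).symm
    exact (map_castHom_eq_zero_iff_natCast_dvd b).mp
      ((mul_eq_zero.mp hb).resolve_right (pow_ne_zero 2 hg))
  have : (p : 𝔸) * (f - a * g - b * g ^ 2) = 0 := by
    linear_combination -hab - b * w * natCast_sq_eq_zero 𝔸 p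
  obtain ⟨y, hy⟩ := (map_castHom_eq_zero_iff_natCast_dvd _).mp
    ((natCast_mul_eq_zero_iff_map_castHom_eq_zero _).mp this)
  exact Ideal.mem_span_pair.mpr ⟨y, a + b * g, by linear_combination -hy⟩

lemma exists_mul_sub_one_mem_paperIdealJ {g w u : 𝔸} (hg : Irreducible (g.map ρ))
    (hu : u ∉ paperIdealK p g) : ∃ c, u * c - 1 ∈ paperIdealJ p g w := by
  obtain ⟨c, x, hx, hcx⟩ := (isMaximal_paperIdealK hg).exists_inv hu
  -- `u c = 1 - x` with `x³ ∈ J`, so `c (1 + x + x²)` inverts `u` modulo `J`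
  refine ⟨c * (1 + x + x ^ 2), ?_⟩
  rw [show u * (c * (1 + x + x ^ 2)) - 1 = -x ^ 3 by linear_combination (1 + x + x ^ 2) * hcx]
  exact neg_mem (pow_three_mem_paperIdealJ hx)

lemma exists_sub_mul_mem_paperIdealJ {g w f : 𝔸} (hg : Irreducible (g.map ρ))
    (hw : w ∉ paperIdealK p g) (hf : f ∈ paperIdealK p g) :
    ∃ v, f - v * g ∈ paperIdealJ p g w := by
  obtain ⟨a, b, rfl⟩ := Ideal.mem_span_pair.mp hf
  obtain ⟨m, x, hx, hmx⟩ := (isMaximal_paperIdealK hg).exists_inv hw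
  -- `m` inverts `w` modulo `𝔪`, so `p ≡ p·m·w ≡ m·g²` modulo `J`
  refine ⟨a * m * g + b, ?_⟩
  rw [show a * p + b * g - (a * m * g + b) * g = a * (p * x) - a * m * (g ^ 2 - p * w) by
    linear_combination (-a * p) * hmx]
  exact sub_mem (Ideal.mul_mem_left _ _ (natCast_mul_mem_paperIdealJ hx))
    (Ideal.mul_mem_left _ _ (Ideal.subset_span (by simp)))

end ResidueField

section PaperRing

variable {p : ℕ} {g u' u : Polynomial (ZMod (p ^ 2))}

local notation "𝔸" => Polynomial (ZMod (p ^ 2))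
local notation "ρ" => ZMod.castHom (dvd_pow_self p two_ne_zero) (ZMod p)
local notation "mkI" => Ideal.Quotient.mk (paperIdealI p g u' u)

lemma mk_C_eq_mul_mk_X : mkI (C g) = mkI (C u') * mkI X := by
  rw [← map_mul, Ideal.Quotient.eq]
  exact Ideal.subset_span (by simp)

lemma mk_X_sq : mkI X ^ 2 = p * mkI (C u) := by
  rw [← map_pow, ← map_natCast mkI, ← map_mul, Ideal.Quotient.eq]
  exact Ideal.subset_span (by simp)

lemma natCast_mul_mk_X : (p : 𝔸[X] ⧸ paperIdealI p g u' u) * mkI X = 0 := by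
  rw [← map_natCast mkI, ← map_mul, Ideal.Quotient.eq_zero_iff_mem]
  exact Ideal.subset_span (by simp)

lemma natCast_mul_mk_C_self : (p : 𝔸[X] ⧸ paperIdealI p g u' u) * mkI (C g) = 0 := by
  linear_combination mkI (C u') * natCast_mul_mk_X + p * mk_C_eq_mul_mk_X

lemma mk_C_self_sq : mkI (C g) ^ 2 = p * mkI (C (u * u' ^ 2)) := by
  simp only [map_mul, map_pow]
  linear_combination
    (mkI (C g) + mkI (C u') * mkI X) * mk_C_eq_mul_mk_X + mkI (C u') ^ 2 * mk_X_sq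

lemma mk_C_eq_zero_of_mem {f : 𝔸} (hf : f ∈ paperIdealJ p g (u * u' ^ 2)) : mkI (C f) = 0 := by
  suffices paperIdealJ p g (u * u' ^ 2) ≤ RingHom.ker (RingHom.comp mkI C) from this hf
  rw [paperIdealJ, Ideal.span_le]
  rintro x (rfl | rfl) <;> rw [SetLike.mem_coe, RingHom.mem_ker, RingHom.comp_apply]
  · rw [map_mul, map_mul, map_natCast, map_natCast]
    exact natCast_mul_mk_C_self
  · rw [map_sub, map_sub, map_pow, map_pow, map_mul, map_mul, map_natCast, map_natCast,
      sub_eq_zero]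
    exact mk_C_self_sq

variable {c : Polynomial (ZMod (p ^ 2))}

lemma mk_X_eq_mk_C (hc : u' * c - 1 ∈ paperIdealJ p g (u * u' ^ 2)) :
    mkI X = mkI (C (c * g)) := by
  have hunit := mk_C_eq_zero_of_mem hc
  simp only [map_sub, map_mul, map_one, sub_eq_zero] at hunit
  rw [map_mul, map_mul, mk_C_eq_mul_mk_X]
  linear_combination (-mkI X) * hunit

lemma mk_eq_mk_C_eval (hc : u' * c - 1 ∈ paperIdealJ p g (u * u' ^ 2)) (F : 𝔸[X]) :
    mkI F = mkI (C (F.eval (c * g))) := by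
  have : mkI = (RingHom.comp mkI C).comp (evalRingHom (c * g)) :=
    ringHom_ext (fun a => by simp) (by simpa using mk_X_eq_mk_C hc)
  exact DFunLike.congr_fun this F

lemma paperIdealI_le_ker_eval (hc : u' * c - 1 ∈ paperIdealJ p g (u * u' ^ 2)) :
    paperIdealI p g u' u ≤
      RingHom.ker
        ((Ideal.Quotient.mk (paperIdealJ p g (u * u' ^ 2))).comp (evalRingHom (c * g))) := by
  set δ := Ideal.Quotient.mk (paperIdealJ p g (u * u' ^ 2))
  have hpg : (p : 𝔸 ⧸ paperIdealJ p g (u * u' ^ 2)) * δ g = 0 := by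
    rw [← map_natCast δ, ← map_mul, Ideal.Quotient.eq_zero_iff_mem]
    exact Ideal.subset_span (by simp)
  have hg2 : δ g ^ 2 = p * (δ u * δ u' ^ 2) := by
    rw [← map_natCast δ, ← map_pow, ← map_pow, ← map_mul, ← map_mul, Ideal.Quotient.eq]
    exact Ideal.subset_span (by simp)
  have hunit : δ u' * δ c = 1 := by
    rw [← map_mul, ← map_one δ, Ideal.Quotient.eq]
    exact hc
  rw [paperIdealI, Ideal.span_le]
  rintro x (rfl | rfl | rfl) <;>
    simp only [SetLike.mem_coe, RingHom.mem_ker, RingHom.comp_apply, coe_evalRingHom]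
  · simp only [eval_sub, eval_mul, eval_C, eval_X, map_sub, map_mul]
    linear_combination (-δ g) * hunit
  · simp only [eval_sub, eval_pow, eval_mul, eval_natCast, eval_C, eval_X, map_sub, map_pow,
      map_mul, map_natCast]
    linear_combination δ c ^ 2 * hg2 + p * δ u * (δ u' * δ c + 1) * hunit
  · simp only [eval_mul, eval_natCast, eval_X, map_mul, map_natCast]
    linear_combination δ c * hpg

variable [Fact p.Prime]

lemma mk_C_surjective (hg : Irreducible (g.map ρ)) (hu' : u' ∉ paperIdealK p g) :
    Function.Surjective (RingHom.comp mkI C) := fun z => by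
  obtain ⟨c, hc⟩ := exists_mul_sub_one_mem_paperIdealJ (w := u * u' ^ 2) hg hu'
  obtain ⟨F, rfl⟩ := Ideal.Quotient.mk_surjective z
  exact ⟨_, (mk_eq_mk_C_eval hc F).symm⟩

lemma mk_C_eq_zero_iff (hg : Irreducible (g.map ρ)) (hu' : u' ∉ paperIdealK p g) {f : 𝔸} :
    mkI (C f) = 0 ↔ f ∈ paperIdealJ p g (u * u' ^ 2) := by
  refine ⟨fun h => ?_, mk_C_eq_zero_of_mem⟩
  obtain ⟨c, hc⟩ := exists_mul_sub_one_mem_paperIdealJ (w := u * u' ^ 2) hg hu'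
  exact Ideal.Quotient.eq_zero_iff_mem.mp
    (by simpa using paperIdealI_le_ker_eval hc (Ideal.Quotient.eq_zero_iff_mem.mp h))

lemma natCast_mul_mk_C_eq_zero_iff (hg : Irreducible (g.map ρ)) (hu' : u' ∉ paperIdealK p g)
    {f : 𝔸} : (p : 𝔸[X] ⧸ paperIdealI p g u' u) * mkI (C f) = 0 ↔ f ∈ paperIdealK p g := by
  rw [← map_natCast mkI, ← map_natCast C, ← map_mul, ← map_mul, mk_C_eq_zero_iff hg hu']
  exact ⟨mem_paperIdealK_of_natCast_mul_mem hg.ne_zero, natCast_mul_mem_paperIdealJ⟩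

end PaperRing

section Residue

variable {p : ℕ} {g u' u : Polynomial (ZMod (p ^ 2))}

local notation "mkI" => Ideal.Quotient.mk (paperIdealI p g u' u)
local notation "mkK" => Ideal.Quotient.mk (paperIdealK p g)

lemma paperKappa_eq_zero_of_mem {a : Polynomial (Polynomial (ZMod (p ^ 2)))}
    (ha : a ∈ paperIdealI p g u' u) : paperKappa p g a = 0 := by
  suffices paperIdealI p g u' u ≤ RingHom.ker (paperKappa p g) from this ha
  have hp : (p : Polynomial (ZMod (p ^ 2)) ⧸ paperIdealK p g) = 0 := by
    rw [← map_natCast mkK, Ideal.Quotient.eq_zero_iff_mem]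
    exact natCast_mem_paperIdealK g
  rw [paperIdealI, Ideal.span_le]
  rintro x (rfl | rfl | rfl) <;>
    simp [paperKappa, hp, Ideal.Quotient.eq_zero_iff_mem, self_mem_paperIdealK]

/-- The residue map `πᵢ : Rᵢ → Kᵢ`. -/
noncomputable def paperResidue (p : ℕ) (g u' u : Polynomial (ZMod (p ^ 2))) :
    Polynomial (Polynomial (ZMod (p ^ 2))) ⧸ paperIdealI p g u' u →+*
      Polynomial (ZMod (p ^ 2)) ⧸ paperIdealK p g :=
  Ideal.Quotient.lift _ (paperKappa p g) fun _ => paperKappa_eq_zero_of_mem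

lemma paperResidue_mk (a : Polynomial (Polynomial (ZMod (p ^ 2)))) :
    paperResidue p g u' u (mkI a) = paperKappa p g a :=
  Ideal.Quotient.lift_mk _ _ _

lemma paperResidue_mk_C (f : Polynomial (ZMod (p ^ 2))) :
    paperResidue p g u' u (mkI (C f)) = mkK f := by
  simp [paperResidue_mk, paperKappa]

lemma paperResidue_surjective : Function.Surjective (paperResidue p g u' u) := fun y => by
  obtain ⟨f, rfl⟩ := Ideal.Quotient.mk_surjective y
  exact ⟨_, paperResidue_mk_C f⟩

end Residue

section Isomorphism

variable {p : ℕ} [Fact p.Prime] {g₁ u₁ u₃ g₂ u₂ u₄ : Polynomial (ZMod (p ^ 2))}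

local notation "ρ" => ZMod.castHom (dvd_pow_self p two_ne_zero) (ZMod p)
local notation "R₁" => Polynomial (Polynomial (ZMod (p ^ 2))) ⧸ paperIdealI p g₁ u₃ u₁
local notation "R₂" => Polynomial (Polynomial (ZMod (p ^ 2))) ⧸ paperIdealI p g₂ u₄ u₂
local notation "mk₁" => Ideal.Quotient.mk (paperIdealI p g₁ u₃ u₁)
local notation "mk₂" => Ideal.Quotient.mk (paperIdealI p g₂ u₄ u₂)

lemma exists_ringEquiv_comp_paperResidue (hg₁ : Irreducible (g₁.map ρ))
    (hg₂ : Irreducible (g₂.map ρ)) (hu₃ : u₃ ∉ paperIdealK p g₁) (σ : R₁ ≃+* R₂) :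
    ∃ τ : Polynomial (ZMod (p ^ 2)) ⧸ paperIdealK p g₁ ≃+*
        Polynomial (ZMod (p ^ 2)) ⧸ paperIdealK p g₂,
      ∀ x, τ (paperResidue p g₁ u₃ u₁ x) = paperResidue p g₂ u₄ u₂ (σ x) := by
  have := isMaximal_paperIdealK hg₁
  have := isMaximal_paperIdealK hg₂
  let := Ideal.Quotient.field (paperIdealK p g₁)
  set τ₀ := ((paperResidue p g₂ u₄ u₂).comp (σ : R₁ →+* R₂)).comp (RingHom.comp mk₁ C)
  have hker : paperIdealK p g₁ ≤ RingHom.ker τ₀ := by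
    rw [paperIdealK, Ideal.span_le, Set.insert_subset_iff, Set.singleton_subset_iff]
    refine ⟨?_, ?_⟩ <;> rw [SetLike.mem_coe, RingHom.mem_ker]
    · rw [map_natCast, ← map_natCast (Ideal.Quotient.mk (paperIdealK p g₂)),
        Ideal.Quotient.eq_zero_iff_mem]
      exact natCast_mem_paperIdealK g₂
    · rw [← pow_eq_zero_iff three_ne_zero, ← map_pow]
      -- `K₂` is a domain and `g₁³ ∈ J₁`
      show paperResidue p g₂ u₄ u₂ (σ (mk₁ (C (g₁ ^ 3)))) = 0
      rw [mk_C_eq_zero_of_mem (pow_three_mem_paperIdealJ (self_mem_paperIdealK g₁)), map_zero,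
        map_zero]
  set τ := Ideal.Quotient.lift _ τ₀ fun _ h => hker h
  have hτ : Function.Surjective τ := fun y => by
    obtain ⟨z, rfl⟩ := paperResidue_surjective (u' := u₄) (u := u₂) y
    obtain ⟨f, hf⟩ := mk_C_surjective hg₁ hu₃ (σ.symm z)
    exact ⟨Ideal.Quotient.mk _ f,
      show paperResidue p g₂ u₄ u₂ (σ (RingHom.comp mk₁ C f)) = _ by
        rw [hf, σ.apply_symm_apply]⟩
  refine ⟨RingEquiv.ofBijective τ ⟨τ.injective, hτ⟩, fun x => ?_⟩
  obtain ⟨f, rfl⟩ := mk_C_surjective hg₁ hu₃ x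
  rw [RingHom.comp_apply, paperResidue_mk_C]
  rfl

lemma exists_map_mk_C_self_eq_mk_C_mul (hg₂ : Irreducible (g₂.map ρ))
    (hu₂ : u₂ ∉ paperIdealK p g₂) (hu₄ : u₄ ∉ paperIdealK p g₂) (σ : R₁ →+* R₂) :
    ∃ u₅, σ (mk₁ (C g₁)) = mk₂ (C u₅ * C g₂) ∧
      Ideal.Quotient.mk (paperIdealK p g₂) (u₅ ^ 2 * (u₂ * u₄ ^ 2)) =
        paperResidue p g₂ u₄ u₂ (σ (mk₁ (C (u₁ * u₃ ^ 2)))) := by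
  obtain ⟨f, hf⟩ := mk_C_surjective hg₂ hu₄ (σ (mk₁ (C g₁)))
  obtain ⟨e, he⟩ := mk_C_surjective hg₂ hu₄ (σ (mk₁ (C (u₁ * u₃ ^ 2))))
  simp only [RingHom.comp_apply] at hf he
  have hfK : f ∈ paperIdealK p g₂ := by
    rw [← natCast_mul_mk_C_eq_zero_iff hg₂ hu₄ (u := u₂), hf, ← map_natCast σ, ← map_mul,
      natCast_mul_mk_C_self, map_zero]
  have hK := (isMaximal_paperIdealK hg₂).isPrime
  have hw₂ : u₂ * u₄ ^ 2 ∉ paperIdealK p g₂ :=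
    hK.mul_notMem hu₂ fun h => hu₄ (hK.mem_of_pow_mem 2 h)
  obtain ⟨u₅, hu₅⟩ := exists_sub_mul_mem_paperIdealJ hg₂ hw₂ hfK
  have hσg₁ : σ (mk₁ (C g₁)) = mk₂ (C u₅ * C g₂) := by
    rw [← hf, ← map_mul, ← sub_eq_zero, ← map_sub, ← map_sub]
    exact mk_C_eq_zero_of_mem hu₅
  refine ⟨u₅, hσg₁, ?_⟩
  rw [← he, paperResidue_mk_C, Ideal.Quotient.eq,
    ← natCast_mul_mk_C_eq_zero_iff hg₂ hu₄ (u := u₂)]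
  have hsq : mk₂ (C u₅ * C g₂) ^ 2 = p * mk₂ (C e) := by
    rw [← hσg₁, he, ← map_pow, mk_C_self_sq, map_mul, map_natCast σ p]
  have hsq₂ := mk_C_self_sq (g := g₂) (u' := u₄) (u := u₂)
  simp only [map_sub, map_mul, map_pow] at hsq hsq₂ ⊢
  linear_combination hsq - mk₂ (C u₅) ^ 2 * hsq₂

lemma exists_mk_C_self_eq_mk_C_mul_and_mk_eq_sq_mul (hg₂ : Irreducible (g₂.map ρ))
    (hu₁ : u₁ ∉ paperIdealK p g₁) (hu₂ : u₂ ∉ paperIdealK p g₂) (hu₃ : u₃ ∉ paperIdealK p g₁)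
    (hu₄ : u₄ ∉ paperIdealK p g₂) (σ : R₁ ≃+* R₂)
    (τ : Polynomial (ZMod (p ^ 2)) ⧸ paperIdealK p g₁ ≃+*
      Polynomial (ZMod (p ^ 2)) ⧸ paperIdealK p g₂)
    (hτ : ∀ x, τ (paperResidue p g₁ u₃ u₁ x) = paperResidue p g₂ u₄ u₂ (σ x)) :
    ∃ v₂ u₅ : Polynomial (ZMod (p ^ 2)),
      v₂ ∉ paperIdealK p g₂ ∧ u₅ ∉ paperIdealK p g₂ ∧
      σ (mk₁ (C g₁)) = mk₂ (C u₅ * C g₂) ∧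
      Ideal.Quotient.mk (paperIdealK p g₂) u₂ =
        Ideal.Quotient.mk (paperIdealK p g₂) v₂ ^ 2 *
          τ (Ideal.Quotient.mk (paperIdealK p g₁) u₁) := by
  have := isMaximal_paperIdealK hg₂
  let := Ideal.Quotient.field (paperIdealK p g₂)
  obtain ⟨u₅, hσg₁, hu₅⟩ := exists_map_mk_C_self_eq_mk_C_mul hg₂ hu₂ hu₄ σ.toRingHom
  simp only [← Ideal.Quotient.eq_zero_iff_mem] at hu₁ hu₃ hu₄ ⊢
  simp only [RingEquiv.toRingHom_eq_coe, RingEquiv.coe_toRingHom] at hσg₁ hu₅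
  rw [← hτ, paperResidue_mk_C] at hu₅
  simp only [map_mul, map_pow] at hu₅
  have hτ₁ := (map_ne_zero_iff τ τ.injective).mpr hu₁
  have hτ₃ := (map_ne_zero_iff τ τ.injective).mpr hu₃
  have hu₅K : Ideal.Quotient.mk (paperIdealK p g₂) u₅ ≠ 0 := by
    intro h
    rw [h, zero_pow two_ne_zero, zero_mul] at hu₅
    exact mul_ne_zero hτ₁ (pow_ne_zero 2 hτ₃) hu₅.symm
  obtain ⟨v₂, hv₂⟩ := Ideal.Quotient.mk_surjective (τ (Ideal.Quotient.mk _ u₃) /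
    (Ideal.Quotient.mk (paperIdealK p g₂) u₅ * Ideal.Quotient.mk _ u₄))
  refine ⟨v₂, u₅, ?_, hu₅K, hσg₁, ?_⟩ <;> rw [hv₂]
  · exact div_ne_zero hτ₃ (mul_ne_zero hu₅K hu₄)
  · field_simp
    linear_combination hu₅

end Isomorphism

/-- Proposition 4.5 (1): if `σ : R₁ → R₂` is a ring isomorphism, where
`Rᵢ = ℤ_{p²}[X,Y]/(gᵢ(X) − u_{i+2}(X)Y, Y² − p·uᵢ(X), pY)`, then `σ` induces a field
isomorphism `τ : K₁ → K₂` of the residue fields `Kᵢ = ℤ_{p²}[X]/(p, gᵢ)` (commuting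
with the residue maps), and there exist `v₂(X), u₅(X) ∉ (p, g₂(X))` such that
`σ(g₁(X)) = u₅(X)·g₂(X)` in `R₂` and `u₂(X) = v₂(X)² · τ(u₁(X))` in `K₂`. -/
theorem paperRingR_iso_implies_of_mixed
    (p : ℕ) (hp : p.Prime)
    (g₁ g₂ u₁ u₂ u₃ u₄ : Polynomial (ZMod (p ^ 2)))
    (hg₁ : g₁.Monic) (hg₂ : g₂.Monic)
    (hg₁irr : Irreducible
      (g₁.map (ZMod.castHom (dvd_pow_self p (by norm_num : (2:ℕ) ≠ 0)) (ZMod p))))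
    (hg₂irr : Irreducible
      (g₂.map (ZMod.castHom (dvd_pow_self p (by norm_num : (2:ℕ) ≠ 0)) (ZMod p))))
    (hu₁ : u₁.map (ZMod.castHom (dvd_pow_self p (by norm_num : (2:ℕ) ≠ 0)) (ZMod p)) ≠ 0)
    (hu₂ : u₂.map (ZMod.castHom (dvd_pow_self p (by norm_num : (2:ℕ) ≠ 0)) (ZMod p)) ≠ 0)
    (hu₃ : u₃.map (ZMod.castHom (dvd_pow_self p (by norm_num : (2:ℕ) ≠ 0)) (ZMod p)) ≠ 0)
    (hu₄ : u₄.map (ZMod.castHom (dvd_pow_self p (by norm_num : (2:ℕ) ≠ 0)) (ZMod p)) ≠ 0)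
    (hu₁deg : u₁.degree < g₁.degree) (hu₃deg : u₃.degree < g₁.degree)
    (hu₂deg : u₂.degree < g₂.degree) (hu₄deg : u₄.degree < g₂.degree)
    (σ : (Polynomial (Polynomial (ZMod (p ^ 2))) ⧸ paperIdealI p g₁ u₃ u₁) ≃+*
      (Polynomial (Polynomial (ZMod (p ^ 2))) ⧸ paperIdealI p g₂ u₄ u₂)) :
    ∃ τ : (Polynomial (ZMod (p ^ 2)) ⧸ paperIdealK p g₁) ≃+*
        (Polynomial (ZMod (p ^ 2)) ⧸ paperIdealK p g₂),
      (∀ a b : Polynomial (Polynomial (ZMod (p ^ 2))),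
        σ (Ideal.Quotient.mk (paperIdealI p g₁ u₃ u₁) a) =
          Ideal.Quotient.mk (paperIdealI p g₂ u₄ u₂) b →
        τ (paperKappa p g₁ a) = paperKappa p g₂ b) ∧
      ∃ v₂ u₅ : Polynomial (ZMod (p ^ 2)),
        v₂ ∉ paperIdealK p g₂ ∧ u₅ ∉ paperIdealK p g₂ ∧
        σ (Ideal.Quotient.mk (paperIdealI p g₁ u₃ u₁) (Polynomial.C g₁)) =
          Ideal.Quotient.mk (paperIdealI p g₂ u₄ u₂) (Polynomial.C u₅ * Polynomial.C g₂) ∧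
        Ideal.Quotient.mk (paperIdealK p g₂) u₂ =
          (Ideal.Quotient.mk (paperIdealK p g₂) v₂) ^ 2 *
            τ (Ideal.Quotient.mk (paperIdealK p g₁) u₁) := by
  have := Fact.mk hp
  have hu₁K := notMem_paperIdealK_of_degree_lt hg₁ hu₁ hu₁deg
  have hu₂K := notMem_paperIdealK_of_degree_lt hg₂ hu₂ hu₂deg
  have hu₃K := notMem_paperIdealK_of_degree_lt hg₁ hu₃ hu₃deg
  have hu₄K := notMem_paperIdealK_of_degree_lt hg₂ hu₄ hu₄deg
  obtain ⟨τ, hτ⟩ := exists_ringEquiv_comp_paperResidue hg₁irr hg₂irr hu₃K σ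
  refine ⟨τ, fun a b hab => ?_,
    exists_mk_C_self_eq_mk_C_mul_and_mk_eq_sq_mul hg₂irr hu₁K hu₂K hu₃K hu₄K σ τ hτ⟩
  rw [← paperResidue_mk, hτ, hab, paperResidue_mk]
end

section
/- Let (R, m) be a commutative local ring whose residue field R/m has characteristic p, where p is prime. If there exist x, y ∈ m such that the ideal (x, y) generated by x and y is not principal, then the p + 2 ideals (x, y), (y), and (x + m·y) for m = 0, 1, …, p − 1 are pairwise distinct nontrivial ideals of R; in particular R has at least p + 2 nontrivial ideals. -/
/-- If `(R, m)` is a commutative local ring whose residue field has prime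
characteristic `p` and `x, y ∈ m` generate a non-principal ideal `(x, y)`, then the
`p + 2` ideals `(x, y)`, `(y)` and `(x + m·y)` for `m = 0, 1, …, p − 1` are pairwise
distinct nontrivial ideals; in particular `R` has at least `p + 2` nontrivial ideals. -/
theorem local_ring_non_principal_pair_gives_many_ideals
    (p : ℕ) (hp : p.Prime) (R : Type*) [CommRing R] [IsLocalRing R]
    [CharP (IsLocalRing.ResidueField R) p]
    (x y : R) (hx : x ∈ IsLocalRing.maximalIdeal R) (hy : y ∈ IsLocalRing.maximalIdeal R)
    (hnp : ¬ (Ideal.span {x, y}).IsPrincipal) :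
    -- the listed ideals are nontrivial …
    ((Ideal.span {x, y} ≠ ⊥ ∧ Ideal.span {x, y} ≠ ⊤) ∧
     (Ideal.span {y} ≠ ⊥ ∧ Ideal.span {y} ≠ ⊤) ∧
     (∀ m : ℕ, m < p →
        Ideal.span {x + (m : R) * y} ≠ ⊥ ∧ Ideal.span {x + (m : R) * y} ≠ ⊤)) ∧
    -- … and pairwise distinct, …
    (Ideal.span {x, y} ≠ Ideal.span {y} ∧
     (∀ m : ℕ, m < p →
        Ideal.span {x, y} ≠ Ideal.span {x + (m : R) * y} ∧
        Ideal.span {y} ≠ Ideal.span {x + (m : R) * y}) ∧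
     (∀ m n : ℕ, m < n → n < p →
        Ideal.span {x + (m : R) * y} ≠ Ideal.span {x + (n : R) * y})) ∧
    -- … so `R` has at least `p + 2` nontrivial ideals.
    (∃ f : Fin (p + 2) → {I : Ideal R // I ≠ ⊥ ∧ I ≠ ⊤}, Function.Injective f) := by
  classical
  set M := IsLocalRing.maximalIdeal R with hM
  have hMtop : M ≠ ⊤ := Ideal.IsMaximal.ne_top inferInstance
  have hne_top : ∀ J : Ideal R, J ≤ M → J ≠ ⊤ := by
    intro J hJ h
    exact hMtop (top_le_iff.mp (h ▸ hJ))
  have hkey : ∀ z : R, Ideal.span {x, y} = Ideal.span {z} → False := by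
    intro z h
    exact hnp (h ▸ ⟨⟨z, rfl⟩⟩)
  have hxmem : x ∈ Ideal.span {x, y} := Ideal.subset_span (by simp)
  have hymem : y ∈ Ideal.span {x, y} := Ideal.subset_span (by simp)
  have hmemxy : ∀ m : ℕ, x + (m : R) * y ∈ Ideal.span {x, y} := fun m =>
    add_mem hxmem (Ideal.mul_mem_left _ _ hymem)
  have hgen : ∀ z : R, x ∈ Ideal.span {z} → y ∈ Ideal.span {z} →
      z ∈ Ideal.span {x, y} → False := by
    intro z h1 h2 h3
    apply hkey z
    apply le_antisymm
    · rw [Ideal.span_le]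
      rintro a ha
      simp only [Set.mem_insert_iff, Set.mem_singleton_iff] at ha
      rcases ha with rfl | rfl <;> assumption
    · rwa [Ideal.span_singleton_le_iff_mem]
  have hunit : ∀ k : ℕ, 0 < k → k < p → IsUnit ((k : ℕ) : R) := by
    intro k hk hkp
    by_contra h
    have hmem : ((k : ℕ) : R) ∈ M := by
      rw [hM, IsLocalRing.mem_maximalIdeal]; exact h
    have h0 : (IsLocalRing.residue R) ((k : ℕ) : R) = 0 :=
      Ideal.Quotient.eq_zero_iff_mem.mpr hmem
    rw [map_natCast] at h0
    have hdvd := (CharP.cast_eq_zero_iff (IsLocalRing.ResidueField R) p k).mp h0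
    exact absurd (Nat.le_of_dvd hk hdvd) (not_le.mpr hkp)
  -- memberships in the maximal ideal
  have hxy_le : Ideal.span {x, y} ≤ M := by
    rw [Ideal.span_le]
    rintro a ha
    simp only [Set.mem_insert_iff, Set.mem_singleton_iff] at ha
    rcases ha with rfl | rfl <;> assumption
  have hy_le : Ideal.span {y} ≤ M := by
    rwa [Ideal.span_singleton_le_iff_mem]
  have hm_le : ∀ m : ℕ, Ideal.span {x + (m : R) * y} ≤ M := by
    intro m
    rw [Ideal.span_singleton_le_iff_mem]
    exact add_mem hx (Ideal.mul_mem_left _ _ hy)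
  -- nontriviality
  have hxy_bot : Ideal.span {x, y} ≠ ⊥ := by
    intro h
    exact hnp (h ▸ bot_isPrincipal)
  have hxy_top : Ideal.span {x, y} ≠ ⊤ := hne_top _ hxy_le
  have hy_bot : Ideal.span {y} ≠ ⊥ := by
    intro h
    rw [Ideal.span_singleton_eq_bot] at h
    subst h
    apply hkey x
    rw [Ideal.span_insert]
    simp [Ideal.span_singleton_le_iff_mem]
  have hy_top : Ideal.span {y} ≠ ⊤ := hne_top _ hy_le
  have hm_bot : ∀ m : ℕ, Ideal.span {x + (m : R) * y} ≠ ⊥ := by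
    intro m h
    rw [Ideal.span_singleton_eq_bot] at h
    apply hgen y
    · rw [Ideal.mem_span_singleton]
      exact ⟨-(m : R), by linear_combination h⟩
    · exact Ideal.mem_span_singleton_self y
    · exact hymem
  -- distinctness
  have hxy_ne : ∀ z : R, Ideal.span {x, y} ≠ Ideal.span {z} := fun z h => (hkey z h).elim
  have hy_ne_m : ∀ m : ℕ, Ideal.span {y} ≠ Ideal.span {x + (m : R) * y} := by
    intro m h
    have h1 : x + (m : R) * y ∈ Ideal.span {y} := by
      rw [h]; exact Ideal.mem_span_singleton_self _
    have h2 : x ∈ Ideal.span {y} := by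
      have := sub_mem h1 (Ideal.mul_mem_left _ (m : R) (Ideal.mem_span_singleton_self y))
      simpa using this
    exact hgen y h2 (Ideal.mem_span_singleton_self y) hymem
  have hm_ne_n : ∀ m n : ℕ, m < n → n < p →
      Ideal.span {x + (m : R) * y} ≠ Ideal.span {x + (n : R) * y} := by
    intro m n hmn hnp' h
    set J := Ideal.span {x + (m : R) * y} with hJ
    have h1 : x + (m : R) * y ∈ J := Ideal.mem_span_singleton_self _
    have h2 : x + (n : R) * y ∈ J := by
      rw [h]; exact Ideal.mem_span_singleton_self _
    have hd : ((n - m : ℕ) : R) * y ∈ J := by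
      have h3 := sub_mem h2 h1
      have he : ((n - m : ℕ) : R) * y = (x + (n : R) * y) - (x + (m : R) * y) := by
        push_cast [Nat.cast_sub hmn.le]
        ring
      rwa [he]
    obtain ⟨u, hu'⟩ := hunit (n - m) (by omega) (by omega)
    have hyJ : y ∈ J := by
      have hy2 : y = ((u⁻¹ : Rˣ) : R) * (((n - m : ℕ) : R) * y) := by
        rw [← hu', ← mul_assoc, Units.inv_mul, one_mul]
      rw [hy2]
      exact Ideal.mul_mem_left _ _ hd
    have hxJ : x ∈ J := by
      have := sub_mem h1 (Ideal.mul_mem_left _ (m : R) hyJ)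
      simpa using this
    exact hgen _ hxJ hyJ (hmemxy m)
  refine ⟨⟨⟨hxy_bot, hxy_top⟩, ⟨hy_bot, hy_top⟩, fun m _ => ⟨hm_bot m, hne_top _ (hm_le m)⟩⟩,
    ⟨hxy_ne y, fun m _ => ⟨hxy_ne _, hy_ne_m m⟩, hm_ne_n⟩, ?_⟩
  -- the injection
  set g : ℕ → Ideal R := fun k =>
    if k = 0 then Ideal.span {x, y}
    else if k = 1 then Ideal.span {y}
    else Ideal.span {x + ((k - 2 : ℕ) : R) * y} with hg
  have hg_nt : ∀ k, k < p + 2 → g k ≠ ⊥ ∧ g k ≠ ⊤ := by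
    intro k hk
    match k with
    | 0 => exact ⟨hxy_bot, hxy_top⟩
    | 1 => exact ⟨hy_bot, hy_top⟩
    | (k + 2) =>
      simp only [hg]
      norm_num
      exact ⟨hm_bot k, hne_top _ (hm_le k)⟩
  have hg_ne : ∀ i j, i < j → j < p + 2 → g i ≠ g j := by
    intro i j hij hj
    match i, j with
    | 0, 1 => exact hxy_ne y
    | 0, (j + 2) => simpa [hg] using hxy_ne (x + ((j : ℕ) : R) * y)
    | 1, (j + 2) => simpa [hg] using hy_ne_m j
    | (i + 2), (j + 2) =>
      simp only [hg]
      norm_num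
      exact hm_ne_n i j (by omega) (by omega)
  refine ⟨fun k => ⟨g k.1, hg_nt k.1 k.2⟩, ?_⟩
  intro a b hab
  have hval : g a.1 = g b.1 := congrArg Subtype.val hab
  by_contra hne
  have hne' : a.1 ≠ b.1 := fun h => hne (Fin.ext h)
  rcases lt_or_gt_of_ne hne' with h | h
  · exact hg_ne _ _ h b.2 hval
  · exact hg_ne _ _ h a.2 hval.symm
end

section
/- Let r ≥ 4 be an integer and let (R, m) be a finite commutative local ring having exactly r nontrivial ideals. If the characteristic of the residue field R/m is a prime p with p ≥ r − 1, then every ideal of R is principal (R is a PIR). -/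
/-!
If the maximal ideal `m` is principal, then so is every prime ideal (there is only one), hence `R`
is a PIR. Otherwise `V = m/m²` has dimension at least two over `k = R/m`. The ideals between `m²`
and `m` correspond to the subspaces of `V`, and the nonzero subspaces (the `|k| + 1` or more lines
together with `V` itself) give at least `|k| + 2 ≥ p + 2 > r` nontrivial ideals.
-/

open IsLocalRing Module
open scoped LinearAlgebra.Projectivization

theorem CharP.le_natCard (R : Type*) [AddGroupWithOne R] [Finite R] (p : ℕ) [CharP R p] :
    p ≤ Nat.card R := by
  simpa using Nat.card_le_card_of_injective (fun i : Fin p ↦ ((i : ℕ) : R))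
    fun i j h ↦ Fin.ext (CharP.natCast_injOn_Iio R p i.isLt j.isLt h)

namespace Projectivization

variable (k V : Type*) [Field k] [AddCommGroup V] [Module k V]

theorem card_field_add_one_le [Finite k] (hV : 2 ≤ finrank k V) :
    Nat.card k + 1 ≤ Nat.card (ℙ k V) := by
  rw [card_of_finrank k V rfl]
  calc Nat.card k + 1 = ∑ i ∈ Finset.range 2, Nat.card k ^ i := by simp
    _ ≤ _ := Finset.sum_le_sum_of_subset (Finset.range_subset_range.mpr hV)

end Projectivization

theorem Submodule.card_field_add_two_le_card_ne_bot {k V : Type*} [Field k] [AddCommGroup V]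
    [Module k V] [Finite k] (hV : 2 ≤ finrank k V) :
    Nat.card k + 2 ≤ Nat.card {W : Submodule k V // W ≠ ⊥} := by
  have : Module.Finite k V := Module.finite_of_finrank_pos (by omega)
  have : Finite V := Module.finite_of_finite k
  have : Nontrivial V := Module.nontrivial_of_finrank_pos (R := k) (by omega)
  have line_ne_bot (l : ℙ k V) : l.submodule ≠ ⊥ := fun h ↦ by
    have := l.finrank_submodule
    rw [h, finrank_bot] at this
    exact zero_ne_one this
  have line_ne_top (l : ℙ k V) : l.submodule ≠ ⊤ := fun h ↦ by
    have := l.finrank_submodule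
    rw [h, finrank_top] at this
    omega
  let f : Option (ℙ k V) → {W : Submodule k V // W ≠ ⊥} :=
    fun l ↦ l.elim ⟨⊤, top_ne_bot⟩ fun l ↦ ⟨l.submodule, line_ne_bot l⟩
  have hf : Function.Injective f := by
    rintro (_ | l) (_ | l') h <;> simp only [f, Option.elim, Subtype.mk.injEq] at h
    · rfl
    · exact absurd h.symm (line_ne_top l')
    · exact absurd h (line_ne_top l)
    · rw [Projectivization.submodule_injective h]
  have := Nat.card_le_card_of_injective f hf
  rw [Finite.card_option] at this
  have := Projectivization.card_field_add_one_le k V hV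
  omega

namespace IsLocalRing

variable {R : Type*} [CommRing R] [IsLocalRing R]

noncomputable def idealOfCotangent (W : Submodule (ResidueField R) (CotangentSpace R)) : Ideal R :=
  ((W.restrictScalars R).comap (maximalIdeal R).toCotangent).map (maximalIdeal R).subtype

theorem idealOfCotangent_injective : Function.Injective (idealOfCotangent (R := R)) :=
  (Submodule.map_injective_of_injective (maximalIdeal R).injective_subtype).comp <|
    (Submodule.comap_injective_of_surjective (maximalIdeal R).toCotangent_surjective).comp
      (Submodule.restrictScalars_injective R _ _)

theorem idealOfCotangent_le_maximalIdeal (W : Submodule (ResidueField R) (CotangentSpace R)) :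
    idealOfCotangent W ≤ maximalIdeal R := by
  rintro _ ⟨x, -, rfl⟩
  exact x.2

theorem idealOfCotangent_ne_bot {W : Submodule (ResidueField R) (CotangentSpace R)}
    (hW : W ≠ ⊥) : idealOfCotangent W ≠ ⊥ := by
  obtain ⟨w, hwW, hw⟩ := W.exists_mem_ne_zero_of_ne_bot hW
  obtain ⟨x, rfl⟩ := (maximalIdeal R).toCotangent_surjective w
  refine (Submodule.ne_bot_iff _).mpr ⟨x, ⟨x, hwW, rfl⟩, fun hx ↦ hw ?_⟩
  rw [show x = 0 from Subtype.ext hx, map_zero]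

theorem card_ne_bot_submodule_cotangentSpace_le [Finite (Ideal R)] :
    Nat.card {W : Submodule (ResidueField R) (CotangentSpace R) // W ≠ ⊥} ≤
      Nat.card {I : Ideal R // I ≠ ⊥ ∧ I ≠ ⊤} :=
  Nat.card_le_card_of_injective
    (fun W ↦ ⟨idealOfCotangent W.1, idealOfCotangent_ne_bot W.2,
      ne_top_of_le_ne_top (maximalIdeal.isMaximal R).ne_top (idealOfCotangent_le_maximalIdeal _)⟩)
    fun _ _ h ↦ Subtype.ext (idealOfCotangent_injective (congrArg Subtype.val h))

theorem isPrincipalIdealRing_of_isPrincipal_maximalIdeal [IsArtinianRing R]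
    (h : (maximalIdeal R).IsPrincipal) : IsPrincipalIdealRing R :=
  IsPrincipalIdealRing.of_prime fun P _ ↦
    (eq_maximalIdeal (IsArtinianRing.isMaximal_of_isPrime P)).symm ▸ h

end IsLocalRing

theorem finite_local_ring_isPrincipalIdealRing_of_large_residue_char_general
    (r p : ℕ)
    (R : Type*) [CommRing R] [IsLocalRing R] [Finite R]
    [CharP (IsLocalRing.ResidueField R) p]
    (hcard : Nat.card {I : Ideal R // I ≠ ⊥ ∧ I ≠ ⊤} = r)
    (hpr : r - 1 ≤ p) :
    IsPrincipalIdealRing R := by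
  refine isPrincipalIdealRing_of_isPrincipal_maximalIdeal (by_contra fun hm ↦ ?_)
  have hrank : 2 ≤ finrank (ResidueField R) (CotangentSpace R) := by
    by_contra! h
    exact hm (finrank_cotangentSpace_le_one_iff.mp (by omega))
  have : Finite (ResidueField R) := .of_surjective _ residue_surjective
  have hsub := Submodule.card_field_add_two_le_card_ne_bot hrank
  have hideal := card_ne_bot_submodule_cotangentSpace_le (R := R)
  have hp := CharP.le_natCard (ResidueField R) p
  omega

/-- If `(R, m)` is a finite commutative local ring with exactly `r ≥ 4` nontrivial
ideals and the characteristic `p` of the residue field `R/m` satisfies `p ≥ r − 1`,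
then every ideal of `R` is principal. -/
theorem finite_local_ring_isPrincipalIdealRing_of_large_residue_char
    (r p : ℕ) (hr : 4 ≤ r) (hp : p.Prime)
    (R : Type*) [CommRing R] [IsLocalRing R] [Finite R]
    [CharP (IsLocalRing.ResidueField R) p]
    (hcard : Nat.card {I : Ideal R // I ≠ ⊥ ∧ I ≠ ⊤} = r)
    (hpr : r - 1 ≤ p) :
    IsPrincipalIdealRing R :=
  finite_local_ring_isPrincipalIdealRing_of_large_residue_char_general r p R hcard hpr
end

section
/- Let R be a finite commutative local ring in which every ideal is principal, and suppose char(R) = p^r for a prime p and integer r ≥ 1. Then there exists a surjective ring homomorphism from the polynomial ring ℤ_{p^r}[X, Y] onto R; that is, R is a homomorphic image of ℤ_{p^r}[X, Y]. -/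
set_option maxHeartbeats 1000000 in
/-- Every finite commutative local principal ideal ring `R` of characteristic `p^r`
(`p` prime, `r ≥ 1`) is a homomorphic image of the polynomial ring `ℤ_{p^r}[X, Y]`,
the latter modelled as `Polynomial (Polynomial (ZMod (p^r)))`. -/
theorem finite_local_pir_is_image_of_polynomial_ring
    (p r : ℕ) (hp : p.Prime) (hr : 1 ≤ r)
    (R : Type*) [CommRing R] [IsLocalRing R] [Finite R] [CharP R (p ^ r)]
    (hpir : IsPrincipalIdealRing R) :
    ∃ f : Polynomial (Polynomial (ZMod (p ^ r))) →+* R, Function.Surjective f := by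
  classical
  set m : Ideal R := IsLocalRing.maximalIdeal R with hm
  obtain ⟨t, ht⟩ : ∃ t, m = Ideal.span {t} := (hpir.principal m).principal
  -- residue field
  set k := IsLocalRing.ResidueField R
  have : Finite k := Quotient.finite _
  cases nonempty_fintype k
  obtain ⟨g, hg⟩ := IsCyclic.exists_generator (α := kˣ)
  obtain ⟨a, ha⟩ := Ideal.Quotient.mk_surjective ((g : k))
  -- define f
  let A : ZMod (p ^ r) →+* R := ZMod.castHom dvd_rfl R
  let G : Polynomial (ZMod (p ^ r)) →+* R := Polynomial.eval₂RingHom A a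
  let f : Polynomial (Polynomial (ZMod (p ^ r))) →+* R := Polynomial.eval₂RingHom G t
  refine ⟨f, ?_⟩
  set S := f.range with hS
  have hton : t ∈ S := ⟨Polynomial.X, by simp [f]⟩
  have haS : a ∈ S := ⟨Polynomial.C Polynomial.X, by simp [f, G]⟩
  have hres : ∀ x : R, IsLocalRing.residue R x = Ideal.Quotient.mk m x := fun _ => rfl
  -- S surjects onto residue field
  have hbase : ∀ x : R, ∃ s ∈ S, x - s ∈ m := by
    intro x
    have htop : Subring.closure {(g : k)} = ⊤ := by
      rw [eq_top_iff]
      rintro y -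
      by_cases hy : y = 0
      · exact hy ▸ zero_mem _
      · obtain ⟨n, hn⟩ := mem_powers_iff_mem_zpowers.mpr (hg (Units.mk0 y hy))
        have : ((g : k)) ^ n = y := by
          have := congrArg (Units.val) hn
          simpa using this
        rw [← this]
        exact pow_mem (Subring.subset_closure (Set.mem_singleton _)) n
    have hy : Ideal.Quotient.mk m x ∈ S.map (IsLocalRing.residue R) := by
      have hle : Subring.closure {(g : k)} ≤ S.map (IsLocalRing.residue R) :=
        Subring.closure_le.mpr (by
          rintro y rfl
          exact ⟨a, haS, by rw [hres, ha]⟩)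
      have := htop ▸ hle
      exact this trivial
    obtain ⟨s, hs, hsx⟩ := hy
    refine ⟨s, hs, ?_⟩
    rw [hres] at hsx
    rw [← Ideal.Quotient.eq_zero_iff_mem, map_sub, hsx, sub_self]
  have htm : t ∈ m := ht ▸ Ideal.mem_span_singleton_self t
  -- approximation lemma
  have key : ∀ n : ℕ, ∀ x : R, ∃ s ∈ S, x - s ∈ m ^ n := by
    intro n
    induction n with
    | zero => intro x; exact ⟨0, zero_mem S, by simp⟩
    | succ n ih =>
      intro x
      obtain ⟨s, hs, hx⟩ := ih x
      have : m ^ n = Ideal.span {t ^ n} := by rw [ht, Ideal.span_singleton_pow]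
      rw [this, Ideal.mem_span_singleton] at hx
      obtain ⟨c, hc⟩ := hx
      obtain ⟨s', hs', hcs'⟩ := hbase c
      refine ⟨s + t ^ n * s', add_mem hs (mul_mem (pow_mem hton n) hs'), ?_⟩
      have : x - (s + t ^ n * s') = t ^ n * (c - s') := by
        rw [mul_sub, ← hc]; ring
      rw [this, pow_succ]
      exact Ideal.mul_mem_mul (Ideal.pow_mem_pow htm n) hcs'
  -- nilpotency
  have : IsArtinianRing R := isArtinian_of_finite
  obtain ⟨n, hn⟩ := IsArtinianRing.isNilpotent_jacobson_bot (R := R)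
  rw [IsLocalRing.jacobson_eq_maximalIdeal ⊥ bot_ne_top] at hn
  intro x
  obtain ⟨s, hs, hx⟩ := key n x
  rw [hn] at hx
  obtain ⟨q, hq⟩ := hs
  have hxs : x - s = 0 := by simpa using hx
  exact ⟨q, hq.trans (sub_eq_zero.mp hxs).symm⟩
end
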